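/- arXiv:1904.01656 — 8 statements merged into one kernel-verified Lean document; each statement's English description precedes it below -/
import Mathlib

section
/- For all integers n and k with 1 ≤ k ≤ n/2, the difference C(n,k) - C(n,k-1) equals the number of k-element subsets Y of {1,...,n} such that for every m with 1 ≤ m ≤ n, the cardinality of Y ∩ {1,...,m} is at most m/2. -/
open scoped Classical

open Finset

open scoped symmDiff

/-! André's reflection principle. Read a set `Y ⊆ {1,…,n}` as a lattice path; `Y` violates the
condition exactly when there is a first `M` with `2·|Y ∩ {1,…,M}| = M + 1`. Flipping membership of
`1,…,M` (taking `Y ∆ {1,…,M}`) removes one element and makes `M` the first index where the path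
lies strictly below the diagonal. For a `(k-1)`-set such an index exists because `2(k-1) < n`,
and flipping it back inverts the map, so the violating `k`-sets are counted by `C(n, k-1)`. -/

def prefixCard (Y : Finset ℕ) (m : ℕ) : ℕ := #(Y ∩ Icc 1 m)

lemma prefixCard_le (Y : Finset ℕ) (m : ℕ) : prefixCard Y m ≤ m :=
  (card_le_card inter_subset_right).trans (Nat.card_Icc 1 m).le

lemma prefixCard_succ_le (Y : Finset ℕ) (m : ℕ) : prefixCard Y (m + 1) ≤ prefixCard Y m + 1 := by
  have hsub : Y ∩ Icc 1 (m + 1) ⊆ insert (m + 1) (Y ∩ Icc 1 m) := by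
    intro x hx
    simp only [mem_inter, mem_Icc, mem_insert] at hx ⊢
    by_cases hxm : x = m + 1
    · exact .inl hxm
    · exact .inr ⟨hx.1, hx.2.1, by omega⟩
  exact (card_le_card hsub).trans (card_insert_le _ _)

lemma prefixCard_of_subset_Icc {Y : Finset ℕ} {n m : ℕ} (hY : Y ⊆ Icc 1 n) (hnm : n ≤ m) :
    prefixCard Y m = #Y :=
  congrArg card (inter_eq_left.2 (hY.trans (Icc_subset_Icc_right hnm)))

lemma prefixCard_symmDiff_Icc (Y : Finset ℕ) {j M : ℕ} (hjM : j ≤ M) :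
    prefixCard (Y ∆ Icc 1 M) j = j - prefixCard Y j := by
  have hflip : (Y ∆ Icc 1 M) ∩ Icc 1 j = Icc 1 j \ Y := by
    ext x
    simp only [mem_inter, mem_symmDiff, mem_Icc, mem_sdiff]
    constructor
    · rintro ⟨⟨hY, hI⟩ | ⟨hI, hY⟩, hx⟩
      · omega
      · exact ⟨hx, hY⟩
    · rintro ⟨hx, hY⟩
      exact ⟨.inr ⟨⟨hx.1, hx.2.trans hjM⟩, hY⟩, hx⟩
  rw [prefixCard, hflip, card_sdiff, Nat.card_Icc, Nat.add_sub_cancel]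
  rfl

lemma card_symmDiff_Icc_add (Y : Finset ℕ) (m : ℕ) :
    #(Y ∆ Icc 1 m) + 2 * prefixCard Y m = #Y + m := by
  have hY := card_sdiff_add_card_inter Y (Icc 1 m)
  have hI := card_sdiff_add_card_inter (Icc 1 m) Y
  rw [inter_comm, Nat.card_Icc, Nat.add_sub_cancel] at hI
  rw [symmDiff_def, sup_eq_union, card_union_of_disjoint disjoint_sdiff_sdiff, prefixCard]
  omega

lemma two_mul_prefixCard_lt_of_subset_Icc {Y : Finset ℕ} {n : ℕ} (hY : Y ⊆ Icc 1 n)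
    (hcard : 2 * #Y < n) : 2 * prefixCard Y n < n := by
  rwa [prefixCard_of_subset_Icc hY le_rfl]

lemma symmDiff_Icc_subset_Icc {Y : Finset ℕ} {n M : ℕ} (hY : Y ⊆ Icc 1 n) (hM : M ≤ n) :
    Y ∆ Icc 1 M ⊆ Icc 1 n :=
  symmDiff_subset_union.trans (union_subset hY (Icc_subset_Icc_right hM))

lemma lt_two_mul_prefixCard_symmDiff_Icc_iff (Y : Finset ℕ) {j M : ℕ} (hjM : j ≤ M) :
    j < 2 * prefixCard (Y ∆ Icc 1 M) j ↔ 2 * prefixCard Y j < j := by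
  have := prefixCard_le Y j
  rw [prefixCard_symmDiff_Icc Y hjM]
  omega

lemma two_mul_prefixCard_symmDiff_Icc_lt_iff (Y : Finset ℕ) {j M : ℕ} (hjM : j ≤ M) :
    2 * prefixCard (Y ∆ Icc 1 M) j < j ↔ j < 2 * prefixCard Y j := by
  have := prefixCard_le Y j
  rw [prefixCard_symmDiff_Icc Y hjM]
  omega

lemma le_of_first_crossing {Y : Finset ℕ} {n M : ℕ} (hY : Y ⊆ Icc 1 n)
    (hM : M < 2 * prefixCard Y M) (hmin : ∀ j < M, ¬ j < 2 * prefixCard Y j) : M ≤ n := by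
  by_contra! hnM
  have := hmin n hnM
  rw [prefixCard_of_subset_Icc hY le_rfl] at this
  rw [prefixCard_of_subset_Icc hY hnM.le] at hM
  omega

/-- Since `prefixCard Y` grows by at most one per step, the first crossing is by exactly one. -/
lemma card_symmDiff_Icc_add_one_of_first_crossing {Y : Finset ℕ} {M : ℕ}
    (hM : M < 2 * prefixCard Y M) (hmin : ∀ j < M, ¬ j < 2 * prefixCard Y j) :
    #(Y ∆ Icc 1 M) + 1 = #Y := by
  have := card_symmDiff_Icc_add Y M
  obtain _ | j := M
  · simp [prefixCard] at hM
  · have := hmin j (Nat.lt_succ_self j)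
    have := prefixCard_succ_le Y j
    omega

noncomputable def reflectAtFirst (P : Finset ℕ → ℕ → Prop) (Y : Finset ℕ) : Finset ℕ :=
  if h : ∃ m, P Y m then Y ∆ Icc 1 (Nat.find h) else Y

lemma reflectAtFirst_eq {P : Finset ℕ → ℕ → Prop} {Y : Finset ℕ} {M : ℕ} (hM : P Y M)
    (hmin : ∀ j < M, ¬ P Y j) : reflectAtFirst P Y = Y ∆ Icc 1 M := by
  have h : ∃ m, P Y m := ⟨M, hM⟩
  rw [reflectAtFirst, dif_pos h, (Nat.find_eq_iff h).2 ⟨hM, hmin⟩]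

lemma reflectAtFirst_reflectAtFirst {P Q : Finset ℕ → ℕ → Prop} {Y : Finset ℕ} {M : ℕ}
    (hM : Q Y M) (hmin : ∀ j < M, ¬ Q Y j) (hPQ : ∀ j ≤ M, P (Y ∆ Icc 1 M) j ↔ Q Y j) :
    reflectAtFirst P (reflectAtFirst Q Y) = Y := by
  rw [reflectAtFirst_eq hM hmin,
    reflectAtFirst_eq ((hPQ M le_rfl).2 hM) fun j hj => (hPQ j hj.le).not.2 (hmin j hj),
    symmDiff_symmDiff_cancel_right]

theorem card_filter_exists_lt_two_mul_prefixCard {n k : ℕ} (hkn : 2 * k < n) :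
    #{Y ∈ (Icc 1 n).powersetCard (k + 1) | ∃ m, m < 2 * prefixCard Y m} = n.choose k := by
  have hchoose : n.choose k = #((Icc 1 n).powersetCard k) := by simp
  rw [hchoose]
  refine card_nbij' (reflectAtFirst fun Y m => m < 2 * prefixCard Y m)
    (reflectAtFirst fun Z m => 2 * prefixCard Z m < m) ?_ ?_ ?_ ?_
  · intro Y hY
    obtain ⟨hY, hbad⟩ := mem_filter.1 hY
    obtain ⟨hsub, hcard⟩ := mem_powersetCard.1 hY
    have hM := Nat.find_spec hbad
    have hmin : ∀ j < Nat.find hbad, _ := fun j => Nat.find_min hbad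
    have hcard' := card_symmDiff_Icc_add_one_of_first_crossing hM hmin
    rw [mem_coe, reflectAtFirst_eq hM hmin, mem_powersetCard]
    exact ⟨symmDiff_Icc_subset_Icc hsub (le_of_first_crossing hsub hM hmin), by omega⟩
  · intro Z hZ
    obtain ⟨hsub, hcard⟩ := mem_powersetCard.1 hZ
    have hlow := two_mul_prefixCard_lt_of_subset_Icc hsub (by omega)
    have hlow' : ∃ m, 2 * prefixCard Z m < m := ⟨n, hlow⟩
    have hM := Nat.find_spec hlow'
    have hmin : ∀ j < Nat.find hlow', _ := fun j => Nat.find_min hlow'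
    have hM' := (lt_two_mul_prefixCard_symmDiff_Icc_iff Z le_rfl).2 hM
    have hcard' := card_symmDiff_Icc_add_one_of_first_crossing hM'
      fun j hj => (lt_two_mul_prefixCard_symmDiff_Icc_iff Z hj.le).not.2 (hmin j hj)
    rw [symmDiff_symmDiff_cancel_right] at hcard'
    rw [coe_filter, reflectAtFirst_eq hM hmin]
    exact ⟨mem_powersetCard.2 ⟨symmDiff_Icc_subset_Icc hsub (Nat.find_min' hlow' hlow), by omega⟩,
      _, hM'⟩
  · intro Y hY
    obtain ⟨-, hbad⟩ := mem_filter.1 hY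
    exact reflectAtFirst_reflectAtFirst (Nat.find_spec hbad) (fun j => Nat.find_min hbad)
      fun j hj => two_mul_prefixCard_symmDiff_Icc_lt_iff Y hj
  · intro Z hZ
    obtain ⟨hsub, hcard⟩ := mem_powersetCard.1 hZ
    have hlow : ∃ m, 2 * prefixCard Z m < m :=
      ⟨n, two_mul_prefixCard_lt_of_subset_Icc hsub (by omega)⟩
    exact reflectAtFirst_reflectAtFirst (Nat.find_spec hlow) (fun j => Nat.find_min hlow)
      fun j hj => lt_two_mul_prefixCard_symmDiff_Icc_iff Z hj

lemma forall_mem_Icc_two_mul_prefixCard_le_iff {Y : Finset ℕ} {n : ℕ} (hY : Y ⊆ Icc 1 n)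
    (hcard : 2 * #Y ≤ n + 1) :
    (∀ m ∈ Icc 1 n, 2 * prefixCard Y m ≤ m) ↔ ¬ ∃ m, m < 2 * prefixCard Y m := by
  push Not
  refine ⟨fun h m => ?_, fun h m _ => h m⟩
  rcases Nat.eq_zero_or_pos m with rfl | hm
  · simp [prefixCard]
  rcases le_or_gt m n with hmn | hnm
  · exact h m (mem_Icc.2 ⟨hm, hmn⟩)
  · rw [prefixCard_of_subset_Icc hY hnm.le]
    omega

/-- For `1 ≤ k ≤ n/2`, the difference `C(n,k) - C(n,k-1)` equals the number of
`k`-element subsets `Y` of `{1,…,n}` such that `|Y ∩ {1,…,m}| ≤ m/2` for all `m`. -/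
theorem binomial_difference_count (n k : ℕ) (hk : 1 ≤ k) (hn : 2 * k ≤ n) :
    Nat.choose n k - Nat.choose n (k - 1) =
      (((Finset.Icc 1 n).powersetCard k).filter
        (fun Y => ∀ m ∈ Finset.Icc 1 n, 2 * (Y ∩ Finset.Icc 1 m).card ≤ m)).card := by
  obtain ⟨j, rfl⟩ : ∃ j, k = j + 1 := ⟨k - 1, by omega⟩
  set S := (Icc 1 n).powersetCard (j + 1)
  have hS : #S = n.choose (j + 1) := by simp [S]
  have hsplit := card_filter_add_card_filter_not (s := S) fun Y => ∃ m, m < 2 * prefixCard Y m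
  rw [card_filter_exists_lt_two_mul_prefixCard (by omega)] at hsplit
  have hgood : ∀ Y ∈ S,
      (∀ m ∈ Icc 1 n, 2 * #(Y ∩ Icc 1 m) ≤ m) ↔ ¬ ∃ m, m < 2 * prefixCard Y m := fun Y hY =>
    forall_mem_Icc_two_mul_prefixCard_le_iff (mem_powersetCard.1 hY).1
      (by rw [(mem_powersetCard.1 hY).2]; omega)
  rw [Nat.add_sub_cancel, ← hS, ← hsplit, Nat.add_sub_cancel_left]
  convert congrArg card (filter_congr hgood).symm
end

section
/- For all integers n and k with 1 ≤ k ≤ n/2, there exists an injection ψ from the (k-1)-element subsets of {1,...,n} to the k-element subsets of {1,...,n} such that X ⊆ ψ(X) for every (k-1)-subset X. -/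
/-!
Let `u` be a finite set with `2r + 1 ≤ #u`, and join an `r`-subset of `u` to the `(r+1)`-subsets
of `u` containing it. Every `r`-subset has `#u - r` neighbours, every `(r+1)`-subset has `r + 1`,
and `r + 1 ≤ #u - r`, so double counting edges shows that any family of `r`-subsets has at least
as many neighbours as members. Hall's marriage theorem then yields the injection.
-/

open Finset

namespace Finset

variable {α : Type*} [DecidableEq α] {u s t : Finset α} {r : ℕ}

def extensionsIn (u s : Finset α) : Finset (Finset α) :=
  (u \ s).image (insert · s)

theorem mem_extensionsIn : t ∈ extensionsIn u s ↔ ∃ a ∈ u \ s, insert a s = t :=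
  mem_image

theorem card_extensionsIn (h : s ⊆ u) : #(extensionsIn u s) = #u - #s := by
  rw [extensionsIn, card_image_of_injOn, card_sdiff_of_subset h]
  exact fun a ha b _ hab => (insert_inj (mem_sdiff.mp ha).2).mp hab

theorem mem_powersetCard_succ_of_mem_extensionsIn (hs : s ∈ u.powersetCard r)
    (ht : t ∈ extensionsIn u s) : t ∈ u.powersetCard (r + 1) ∧ s ⊆ t := by
  obtain ⟨hsu, rfl⟩ := mem_powersetCard.mp hs
  obtain ⟨a, ha, rfl⟩ := mem_extensionsIn.mp ht
  obtain ⟨hau, has⟩ := mem_sdiff.mp ha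
  exact ⟨mem_powersetCard.mpr ⟨insert_subset hau hsu, card_insert_of_notMem has⟩,
    subset_insert a s⟩

theorem card_le_card_biUnion_extensionsIn {𝒜 : Finset (Finset α)} (h𝒜 : 𝒜 ⊆ u.powersetCard r)
    (hu : 2 * r + 1 ≤ #u) : #𝒜 ≤ #(𝒜.biUnion (extensionsIn u)) := by
  set ℬ := 𝒜.biUnion (extensionsIn u)
  have h_above : ∀ s ∈ 𝒜, #u - r ≤ #(ℬ.bipartiteAbove (· ⊆ ·) s) := by
    intro s hs
    obtain ⟨hsu, hsr⟩ := mem_powersetCard.mp (h𝒜 hs)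
    rw [← hsr, ← card_extensionsIn hsu]
    refine card_le_card fun t ht => (mem_bipartiteAbove _).mpr ⟨mem_biUnion.mpr ⟨s, hs, ht⟩, ?_⟩
    exact (mem_powersetCard_succ_of_mem_extensionsIn (h𝒜 hs) ht).2
  have h_below : ∀ t ∈ ℬ, #(𝒜.bipartiteBelow (· ⊆ ·) t) ≤ r + 1 := by
    intro t ht
    obtain ⟨s, hs, hst⟩ := mem_biUnion.mp ht
    have htr := (mem_powersetCard.mp
      (mem_powersetCard_succ_of_mem_extensionsIn (h𝒜 hs) hst).1).2
    calc #(𝒜.bipartiteBelow (· ⊆ ·) t) ≤ #(t.powersetCard r) := by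
          refine card_le_card fun s' hs' => ?_
          obtain ⟨hs'𝒜, hs't⟩ := (mem_bipartiteBelow _).mp hs'
          exact mem_powersetCard.mpr ⟨hs't, (mem_powersetCard.mp (h𝒜 hs'𝒜)).2⟩
      _ = r + 1 := by rw [card_powersetCard, htr, Nat.choose_succ_self_right]
  have h_count := card_mul_le_card_mul (fun s t : Finset α => s ⊆ t) h_above h_below
  have h_degrees : #ℬ * (r + 1) ≤ #ℬ * (#u - r) := Nat.mul_le_mul_left _ (by omega)
  exact Nat.le_of_mul_le_mul_right (h_count.trans h_degrees) (by omega)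

theorem exists_injOn_powersetCard_succ_superset (hu : 2 * r + 1 ≤ #u) :
    ∃ ψ : Finset α → Finset α,
      (∀ s ∈ u.powersetCard r, ψ s ∈ u.powersetCard (r + 1) ∧ s ⊆ ψ s) ∧
      Set.InjOn ψ (u.powersetCard r : Set (Finset α)) := by
  have hall : ∀ 𝒮 : Finset (u.powersetCard r),
      #𝒮 ≤ #(𝒮.biUnion fun s => extensionsIn u s) := by
    intro 𝒮
    have := card_le_card_biUnion_extensionsIn (𝒜 := 𝒮.image Subtype.val)
      (fun s hs => by obtain ⟨s, -, rfl⟩ := mem_image.mp hs; exact s.2) hu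
    rwa [card_image_of_injective _ Subtype.val_injective, image_biUnion] at this
  obtain ⟨f, hf_inj, hf_mem⟩ := (all_card_le_biUnion_card_iff_exists_injective _).mp hall
  refine ⟨fun s => if hs : s ∈ u.powersetCard r then f ⟨s, hs⟩ else s, fun s hs => ?_, ?_⟩
  · simpa only [dif_pos hs] using mem_powersetCard_succ_of_mem_extensionsIn hs (hf_mem ⟨s, hs⟩)
  · intro s hs t ht hst
    simp only [mem_coe] at hs ht
    simp only [dif_pos hs, dif_pos ht] at hst
    exact congrArg Subtype.val (hf_inj hst)

end Finset

/-- For `1 ≤ k ≤ n/2` there is an injection `ψ` from `(k-1)`-subsets of `{1,…,n}`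
to `k`-subsets of `{1,…,n}` with `X ⊆ ψ X` for all `X`. -/
theorem exists_nested_injection (n k : ℕ) (hk : 1 ≤ k) (hn : 2 * k ≤ n) :
    ∃ ψ : Finset ℕ → Finset ℕ,
      (∀ X ∈ (Finset.Icc 1 n).powersetCard (k - 1),
          ψ X ∈ (Finset.Icc 1 n).powersetCard k ∧ X ⊆ ψ X) ∧
      Set.InjOn ψ ((Finset.Icc 1 n).powersetCard (k - 1) : Finset (Finset ℕ)) := by
  have hu : 2 * (k - 1) + 1 ≤ #(Icc 1 n) := by rw [Nat.card_Icc]; omega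
  obtain ⟨ψ, hψ, hψ_inj⟩ := exists_injOn_powersetCard_succ_superset hu
  rw [Nat.sub_add_cancel hk] at hψ
  exact ⟨ψ, hψ, hψ_inj⟩
end

section
/- Define ψ on (k-1)-element subsets X of {1,...,n} (with 1 ≤ k ≤ n/2) as follows: let ℓ be the smallest nonnegative integer such that |X ∩ {1,...,2ℓ+1}| = ℓ (such ℓ exists), and set ψ(X) = (X \ {1,...,2ℓ+1}) ∪ ({1,...,2ℓ+1} \ X). Then ψ(X) has exactly k elements, and ψ is an injection from (k-1)-subsets to k-subsets of {1,...,n}. -/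
/-!
The reflection index `ℓ(X)` exists by a discrete intermediate value argument: the count
`|X ∩ {1,…,2m+1}|` is monotone in `m` and is at most `m` once `m ≥ |X|`, so at the least `m`
where it is `≤ m` it equals `m`. The reflection `ψ(X) = X ∆ {1,…,2ℓ+1}` trades the `ℓ`
elements of `X` in the block for the `ℓ + 1` others, so `|ψ(X)| = |X| + 1`. Inside the block
`ψ(X)` is the complement of `X`, so `ℓ(X)` is recovered from `ψ(X)` as the least `m` with
`|ψ(X) ∩ {1,…,2m+1}| = m + 1`; hence `ψ` is injective on all finite sets, being inverted by
`Y ↦ Y ∆ {1,…,2ℓ+1}`.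
-/

open Finset
open scoped symmDiff

namespace Finset

variable {α : Type*} [DecidableEq α]

theorem card_symmDiff_add_two_mul_card_inter (s t : Finset α) :
    #(s ∆ t) + 2 * #(s ∩ t) = #s + #t := by
  have hs := card_sdiff_add_card_inter s t
  have ht := card_sdiff_add_card_inter t s
  rw [symmDiff_def, sup_eq_union, card_union_of_disjoint disjoint_sdiff_sdiff, inter_comm t s]
    at *
  omega

theorem symmDiff_inter_of_subset {s t u : Finset α} (h : u ⊆ t) :
    s ∆ t ∩ u = u \ s := by
  ext a
  have := @h a
  simp only [mem_inter, mem_sdiff, mem_symmDiff]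
  tauto

end Finset

theorem card_inter_Icc_mono (X : Finset ℕ) : Monotone fun m => #(X ∩ Icc 1 (2 * m + 1)) :=
  fun _ _ h => card_le_card <| inter_subset_inter_left <| Icc_subset_Icc_right (by omega)

theorem exists_card_inter_Icc_eq (X : Finset ℕ) :
    ∃ m ≤ #X, #(X ∩ Icc 1 (2 * m + 1)) = m := by
  have hex : ∃ m, #(X ∩ Icc 1 (2 * m + 1)) ≤ m :=
    ⟨#X, card_le_card inter_subset_left⟩
  refine ⟨Nat.find hex, Nat.find_min' hex (card_le_card inter_subset_left),
    le_antisymm (Nat.find_spec hex) ?_⟩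
  rcases Nat.eq_zero_or_pos (Nat.find hex) with h0 | hpos
  · omega
  · have hbelow := Nat.find_min hex (Nat.sub_one_lt_of_lt hpos)
    have hmono := card_inter_Icc_mono X (Nat.sub_le (Nat.find hex) 1)
    simp only at hmono
    omega

noncomputable def reflectionIndex (X : Finset ℕ) : ℕ :=
  sInf {m : ℕ | #(X ∩ Icc 1 (2 * m + 1)) = m}

noncomputable def reflection (X : Finset ℕ) : Finset ℕ :=
  X ∆ Icc 1 (2 * reflectionIndex X + 1)

section reflection

variable (X : Finset ℕ)

theorem card_inter_Icc_reflectionIndex :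
    #(X ∩ Icc 1 (2 * reflectionIndex X + 1)) = reflectionIndex X :=
  have ⟨_, _, hm⟩ := exists_card_inter_Icc_eq X
  Nat.sInf_mem (s := {m | #(X ∩ Icc 1 (2 * m + 1)) = m}) ⟨_, hm⟩

theorem reflectionIndex_le_card : reflectionIndex X ≤ #X :=
  have ⟨_, hle, hm⟩ := exists_card_inter_Icc_eq X
  (Nat.sInf_le (s := {m | #(X ∩ Icc 1 (2 * m + 1)) = m}) hm).trans hle

theorem card_inter_Icc_ne_of_lt_reflectionIndex {m : ℕ} (hm : m < reflectionIndex X) :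
    #(X ∩ Icc 1 (2 * m + 1)) ≠ m :=
  Nat.notMem_of_lt_sInf (s := {m | #(X ∩ Icc 1 (2 * m + 1)) = m}) hm

theorem card_reflection : #(reflection X) = #X + 1 := by
  have h := card_symmDiff_add_two_mul_card_inter X (Icc 1 (2 * reflectionIndex X + 1))
  rw [card_inter_Icc_reflectionIndex, Nat.card_Icc] at h
  rw [reflection]
  omega

theorem reflection_subset_Icc {n : ℕ} (hX : X ⊆ Icc 1 n) (hn : 2 * #X + 1 ≤ n) :
    reflection X ⊆ Icc 1 n := by
  have hI : Icc 1 (2 * reflectionIndex X + 1) ⊆ Icc 1 n :=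
    Icc_subset_Icc_right (by have := reflectionIndex_le_card X; omega)
  exact symmDiff_le_sup.trans (union_subset hX hI)

theorem card_reflection_inter_Icc {m : ℕ} (hm : m ≤ reflectionIndex X) :
    #(reflection X ∩ Icc 1 (2 * m + 1)) + #(X ∩ Icc 1 (2 * m + 1)) = 2 * m + 1 := by
  rw [reflection, symmDiff_inter_of_subset (Icc_subset_Icc_right (by omega)), inter_comm,
    card_sdiff_add_card_inter, Nat.card_Icc]
  omega

theorem reflectionIndex_le_of_reflection_eq {X Y : Finset ℕ} (h : reflection X = reflection Y) :
    reflectionIndex Y ≤ reflectionIndex X := by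
  by_contra! hlt
  have hX := card_reflection_inter_Icc X le_rfl
  have hY := card_reflection_inter_Icc Y hlt.le
  have hne := card_inter_Icc_ne_of_lt_reflectionIndex Y hlt
  rw [card_inter_Icc_reflectionIndex, h] at hX
  omega

theorem reflection_injective : Function.Injective reflection := fun X Y h => by
  have hidx := le_antisymm (reflectionIndex_le_of_reflection_eq h.symm)
    (reflectionIndex_le_of_reflection_eq h)
  calc X = reflection X ∆ Icc 1 (2 * reflectionIndex X + 1) :=
        (symmDiff_symmDiff_cancel_right _ _).symm
    _ = reflection Y ∆ Icc 1 (2 * reflectionIndex Y + 1) := by rw [h, hidx]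
    _ = Y := symmDiff_symmDiff_cancel_right _ _

end reflection

/-- The reflection-principle injection: for a `(k-1)`-subset `X` of `{1,…,n}`
(with `1 ≤ k ≤ n/2`), let `ℓ` be the smallest nonnegative integer with
`|X ∩ {1,…,2ℓ+1}| = ℓ` (it exists), and set
`ψ(X) = (X \ {1,…,2ℓ+1}) ∪ ({1,…,2ℓ+1} \ X)`.  Then `|ψ(X)| = k` and `ψ` is an
injection from `(k-1)`-subsets to `k`-subsets of `{1,…,n}`. -/
theorem reflection_injection (n k : ℕ) (hk : 1 ≤ k) (hn : 2 * k ≤ n)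
    (L : Finset ℕ → ℕ)
    (hL : ∀ X, L X = sInf {ℓ : ℕ | (X ∩ Finset.Icc 1 (2 * ℓ + 1)).card = ℓ})
    (ψ : Finset ℕ → Finset ℕ)
    (hψ : ∀ X, ψ X =
      (X \ Finset.Icc 1 (2 * L X + 1)) ∪ (Finset.Icc 1 (2 * L X + 1) \ X)) :
    (∀ X ∈ (Finset.Icc 1 n).powersetCard (k - 1),
        {ℓ : ℕ | (X ∩ Finset.Icc 1 (2 * ℓ + 1)).card = ℓ}.Nonempty ∧
        (ψ X).card = k ∧ ψ X ∈ (Finset.Icc 1 n).powersetCard k) ∧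
    Set.InjOn ψ ((Finset.Icc 1 n).powersetCard (k - 1) : Finset (Finset ℕ)) := by
  obtain rfl : L = reflectionIndex := funext hL
  obtain rfl : ψ = reflection :=
    funext fun X => by rw [hψ, reflection, symmDiff_def, sup_eq_union]
  refine ⟨fun X hX => ?_, reflection_injective.injOn⟩
  obtain ⟨hXsub, hXcard⟩ := mem_powersetCard.mp hX
  have hcard : #(reflection X) = k := by rw [card_reflection, hXcard]; omega
  have ⟨m, _, hm⟩ := exists_card_inter_Icc_eq X
  exact ⟨⟨m, hm⟩, hcard,
    mem_powersetCard.mpr ⟨reflection_subset_Icc X hXsub (by omega), hcard⟩⟩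
end

section
/- For any partition λ of n, the square of the number of standard Young tableaux of shape λ is at most n!: (f^λ)² ≤ n!. -/
/-!
Young's lattice is a differential poset: every diagram has exactly one more upper cover than
lower covers, and two distinct diagrams of the same size have as many common upper covers as
common lower covers. Since `f^D` satisfies `f^D = ∑_{E ⋖ D} f^E` (remove the cell holding the
largest entry), these two facts give `∑_{D ⋖ E} f^E = (|D| + 1) f^D`, and then by induction
`∑_{|D| = n} (f^D)² = n!`, of which `(f^λ)²` is one summand.
-/

/-- The cells of the Young diagram of a partition `p ⊢ n`:
`(i, j)` (0-indexed) is a cell iff `i` is less than the number of parts of `p`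
exceeding `j`. -/
def cellsOf {n : ℕ} (p : Nat.Partition n) : Finset (ℕ × ℕ) :=
  (Finset.range n ×ˢ Finset.range n).filter
    fun c => c.1 < (p.parts.filter fun a => c.2 < a).card

/-- `sytCount p` is the number `f^p` of standard Young tableaux of shape `p ⊢ n`:
bijective fillings of the cells of `p` by `{0,…,n-1}`, strictly increasing along
rows and columns. -/
noncomputable def sytCount {n : ℕ} (p : Nat.Partition n) : ℕ :=
  Nat.card {T : cellsOf p → Fin n //
    Function.Bijective T ∧
    (∀ c d : cellsOf p, c.1.1 = d.1.1 → c.1.2 < d.1.2 → T c < T d) ∧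
    (∀ c d : cellsOf p, c.1.2 = d.1.2 → c.1.1 < d.1.1 → T c < T d)}

open Finset

lemma Finset.card_filter_range_lt (k n : ℕ) : #((range n).filter (· < k)) = min n k := by
  rw [range_eq_Ico, Ico_filter_lt, Nat.card_Ico, Nat.sub_zero]

lemma Multiset.sum_range_card_filter_lt {n : ℕ} {s : Multiset ℕ} (hs : ∀ a ∈ s, a ≤ n) :
    ∑ j ∈ Finset.range n, card (s.filter (j < ·)) = s.sum := by
  induction s using Multiset.induction with
  | empty => simp
  | cons a s ih =>
    rw [Multiset.forall_mem_cons] at hs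
    simp only [Multiset.filter_cons, Multiset.card_add, sum_add_distrib, ih hs.2,
      Multiset.sum_cons]
    congr 1
    simp only [apply_ite, Multiset.card_singleton, Multiset.card_zero]
    rw [← card_filter, card_filter_range_lt, min_eq_right hs.1]

namespace YoungDiagram

instance : DecidableEq YoungDiagram := fun _ _ =>
  decidable_of_iff _ YoungDiagram.ext_iff.symm

variable {D E : YoungDiagram} {c : ℕ × ℕ}

lemma fst_lt_card_cells (hc : c ∈ D) : c.1 < #D.cells :=
  calc c.1 < D.colLen c.2 := mem_iff_lt_colLen.1 hc
    _ ≤ D.colLen 0 := D.colLen_anti 0 c.2 c.2.zero_le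
    _ = #(D.col 0) := D.colLen_eq_card
    _ ≤ #D.cells := card_le_card (filter_subset _ _)

lemma card_cells_eq_zero_iff : #D.cells = 0 ↔ D = ⊥ := by
  rw [card_eq_zero, ← cells_bot, YoungDiagram.ext_iff]

lemma ne_bot_of_card_cells_eq_succ {n : ℕ} (h : #D.cells = n + 1) : D ≠ ⊥ := by
  rintro rfl
  simp at h

lemma card_cells_le_of_le (h : D ≤ E) : #D.cells ≤ #E.cells :=
  card_le_card (cells_subset_iff.2 h)

lemma eq_of_le_of_card_cells_le (h : D ≤ E) (hc : #E.cells ≤ #D.cells) : D = E :=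
  YoungDiagram.ext (eq_of_subset_of_card_le (cells_subset_iff.2 h) hc)

def insertCell (D : YoungDiagram) (c : ℕ × ℕ) (hc : Minimal (· ∉ D) c) : YoungDiagram where
  cells := insert c D.cells
  isLowerSet x y hyx hx := by
    simp only [coe_insert, Set.mem_insert_iff, mem_coe, mem_cells] at hx ⊢
    rcases hx with rfl | hx
    · by_contra! h
      exact h.1 (le_antisymm hyx (hc.2 h.2 hyx))
    · exact .inr (D.isLowerSet hyx hx)

def eraseCell (D : YoungDiagram) (c : ℕ × ℕ) (hc : Maximal (· ∈ D) c) : YoungDiagram where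
  cells := D.cells.erase c
  isLowerSet x y hyx hx := by
    simp only [coe_erase, Set.mem_sdiff, mem_coe, mem_cells, Set.mem_singleton_iff] at hx ⊢
    refine ⟨D.isLowerSet hyx hx.1, ?_⟩
    rintro rfl
    exact hx.2 (le_antisymm (hc.2 hx.1 hyx) hyx)

lemma minimal_notMem_of_cells_eq_insert (hc : c ∉ D) (hE : E.cells = insert c D.cells) :
    Minimal (· ∉ D) c := by
  refine ⟨hc, fun x hx hxc => ?_⟩
  obtain rfl | hlt := hxc.eq_or_lt
  · exact le_rfl
  refine absurd ?_ hx
  have hxE : x ∈ E := E.isLowerSet hxc (by simp [hE])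
  simpa [← mem_cells, hE, hlt.ne] using hxE

lemma maximal_mem_of_cells_eq_erase (hc : c ∈ D) (hE : E.cells = D.cells.erase c) :
    Maximal (· ∈ D) c := by
  refine ⟨hc, fun x hx hcx => ?_⟩
  obtain rfl | hlt := hcx.eq_or_lt
  · exact le_rfl
  exfalso
  have hxE : x ∈ E := by simpa [← mem_cells, hE, hlt.ne'] using hx
  simpa [← mem_cells, hE] using E.isLowerSet hcx hxE

def addableRows (D : YoungDiagram) : Finset ℕ :=
  (range (#D.cells + 1)).filter fun i => i = 0 ∨ D.rowLen i < D.rowLen (i - 1)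

def removableRows (D : YoungDiagram) : Finset ℕ :=
  (range #D.cells).filter fun i => D.rowLen (i + 1) < D.rowLen i

lemma minimal_notMem_iff {i j : ℕ} :
    Minimal (· ∉ D) (i, j) ↔ i ∈ D.addableRows ∧ j = D.rowLen i := by
  simp only [addableRows, mem_filter, mem_range]
  constructor
  · intro h
    have hj : D.rowLen i ≤ j := not_lt.1 (mem_iff_lt_rowLen.not.1 h.1)
    have hj' : j ≤ D.rowLen i :=
      (h.2 (mem_iff_lt_rowLen.not.2 (lt_irrefl _)) ⟨le_rfl, hj⟩).2
    have hup : i ≠ 0 → (i - 1, j) ∈ D := fun hi => by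
      by_contra hmem
      have := (h.2 hmem ⟨Nat.sub_le i 1, le_rfl⟩).1
      omega
    refine ⟨⟨?_, ?_⟩, by omega⟩
    · rcases eq_or_ne i 0 with hi | hi
      · omega
      · have : i - 1 < #D.cells := fst_lt_card_cells (hup hi)
        omega
    · rcases eq_or_ne i 0 with hi | hi
      · exact .inl hi
      · exact .inr (by have := mem_iff_lt_rowLen.1 (hup hi); omega)
  · rintro ⟨⟨-, hi⟩, rfl⟩
    refine ⟨mem_iff_lt_rowLen.not.2 (lt_irrefl _), fun ⟨a, b⟩ hab hle => ?_⟩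
    obtain ⟨ha : a ≤ i, hb : b ≤ D.rowLen i⟩ := hle
    have hai : a = i := by
      by_contra hne
      have : D.rowLen (i - 1) ≤ D.rowLen a := D.rowLen_anti a (i - 1) (by omega)
      exact hab (mem_iff_lt_rowLen.2 (by omega))
    subst hai
    exact ⟨le_rfl, not_lt.1 (mem_iff_lt_rowLen.not.1 hab)⟩

lemma maximal_mem_iff {i j : ℕ} :
    Maximal (· ∈ D) (i, j) ↔ i ∈ D.removableRows ∧ j + 1 = D.rowLen i := by
  simp only [removableRows, mem_filter, mem_range]
  constructor
  · intro h
    have hj : j < D.rowLen i := mem_iff_lt_rowLen.1 h.1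
    have hright : ¬ j + 1 < D.rowLen i := fun hlt =>
      absurd (h.2 (mem_iff_lt_rowLen.2 hlt) ⟨le_rfl, j.le_succ⟩).2 (by simp)
    have hdown : ¬ j < D.rowLen (i + 1) := fun hlt =>
      absurd (h.2 (mem_iff_lt_rowLen.2 hlt) ⟨i.le_succ, le_rfl⟩).1 (by simp)
    exact ⟨⟨fst_lt_card_cells h.1, by omega⟩, by omega⟩
  · rintro ⟨⟨-, hi⟩, hj⟩
    refine ⟨mem_iff_lt_rowLen.2 (by omega), fun ⟨a, b⟩ hab hle => ?_⟩
    obtain ⟨ha : i ≤ a, hb : j ≤ b⟩ := hle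
    have hai : a = i := by
      by_contra hne
      have : D.rowLen a ≤ D.rowLen (i + 1) := D.rowLen_anti (i + 1) a (by omega)
      have := mem_iff_lt_rowLen.1 hab
      omega
    subst hai
    exact ⟨le_rfl, by have := mem_iff_lt_rowLen.1 hab; omega⟩

-- A cell can be added to row `i + 1` exactly when one can be removed from row `i`.
lemma addableRows_eq_insert_zero :
    D.addableRows = insert 0 (D.removableRows.map (addLeftEmbedding 1)) := by
  ext i
  simp only [addableRows, removableRows, mem_filter, mem_range, mem_insert, mem_map,
    addLeftEmbedding_apply]
  constructor
  · rintro ⟨hi, rfl | h⟩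
    · exact .inl rfl
    · rcases Nat.eq_zero_or_pos i with rfl | hpos
      · exact .inl rfl
      · refine .inr ⟨i - 1, ⟨?_, by rwa [Nat.sub_add_cancel hpos]⟩, by omega⟩
        exact fst_lt_card_cells (mem_iff_lt_rowLen.2 (by omega : 0 < D.rowLen (i - 1)))
  · rintro (rfl | ⟨k, ⟨hk, h⟩, rfl⟩)
    · exact ⟨by omega, .inl rfl⟩
    · exact ⟨by omega, .inr (by simpa [add_comm] using h)⟩

lemma card_addableRows : #D.addableRows = #D.removableRows + 1 := by
  rw [addableRows_eq_insert_zero, card_insert_of_notMem (by simp), card_map]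

def addableCells (D : YoungDiagram) : Finset (ℕ × ℕ) :=
  D.addableRows.image fun i => (i, D.rowLen i)

def removableCells (D : YoungDiagram) : Finset (ℕ × ℕ) :=
  D.removableRows.image fun i => (i, D.rowLen i - 1)

lemma mem_addableCells : c ∈ D.addableCells ↔ Minimal (· ∉ D) c := by
  obtain ⟨i, j⟩ := c
  simp only [addableCells, mem_image, Prod.mk.injEq, minimal_notMem_iff]
  constructor
  · rintro ⟨i, hi, rfl, rfl⟩
    exact ⟨hi, rfl⟩
  · rintro ⟨hi, rfl⟩
    exact ⟨i, hi, rfl, rfl⟩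

lemma mem_removableCells : c ∈ D.removableCells ↔ Maximal (· ∈ D) c := by
  obtain ⟨i, j⟩ := c
  simp only [removableCells, mem_image, Prod.mk.injEq, maximal_mem_iff]
  constructor
  · rintro ⟨i, hi, rfl, rfl⟩
    exact ⟨hi, by simp only [removableRows, mem_filter] at hi; omega⟩
  · rintro ⟨hi, hj⟩
    exact ⟨i, hi, rfl, by omega⟩

lemma card_addableCells : #D.addableCells = #D.removableCells + 1 := by
  have hinj {f : ℕ → ℕ} : Function.Injective fun i => (i, f i) := fun _ _ h =>
    (Prod.ext_iff.1 h).1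
  rw [addableCells, removableCells, card_image_of_injective _ hinj,
    card_image_of_injective _ hinj, card_addableRows]

def upperCovers (D : YoungDiagram) : Finset YoungDiagram :=
  D.addableCells.attach.image fun c : {c // c ∈ D.addableCells} =>
    D.insertCell c (mem_addableCells.1 c.2)

def lowerCovers (D : YoungDiagram) : Finset YoungDiagram :=
  D.removableCells.attach.image fun c : {c // c ∈ D.removableCells} =>
    D.eraseCell c (mem_removableCells.1 c.2)

lemma mem_upperCovers : E ∈ D.upperCovers ↔ D ≤ E ∧ #D.cells + 1 = #E.cells := by
  constructor
  · simp only [upperCovers, mem_image, mem_attach, true_and]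
    rintro ⟨⟨c, hc⟩, rfl⟩
    refine ⟨cells_subset_iff.1 (subset_insert _ _), (card_insert_of_notMem ?_).symm⟩
    simpa using (mem_addableCells.1 hc).1
  · rintro ⟨hle, hcard⟩
    obtain ⟨c, hc, hE⟩ := exists_eq_insert_iff.2 ⟨cells_subset_iff.2 hle, hcard⟩
    have hmin := minimal_notMem_of_cells_eq_insert (by simpa using hc) hE.symm
    exact mem_image.2 ⟨⟨c, mem_addableCells.2 hmin⟩, mem_attach _ _, YoungDiagram.ext hE⟩

lemma mem_lowerCovers : E ∈ D.lowerCovers ↔ E ≤ D ∧ #E.cells + 1 = #D.cells := by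
  constructor
  · simp only [lowerCovers, mem_image, mem_attach, true_and]
    rintro ⟨⟨c, hc⟩, rfl⟩
    exact ⟨cells_subset_iff.1 (erase_subset _ _),
      card_erase_add_one ((mem_cells _).2 (mem_removableCells.1 hc).1)⟩
  · rintro ⟨hle, hcard⟩
    obtain ⟨c, hc, hD⟩ := exists_eq_insert_iff.2 ⟨cells_subset_iff.2 hle, hcard⟩
    have hcD : c ∈ D := by simp [← mem_cells, ← hD]
    have hE : E.cells = D.cells.erase c := by rw [← hD, erase_insert hc]
    have hmax := maximal_mem_of_cells_eq_erase hcD hE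
    exact mem_image.2
      ⟨⟨c, mem_removableCells.2 hmax⟩, mem_attach _ _, (YoungDiagram.ext hE).symm⟩

lemma mem_lowerCovers_iff_mem_upperCovers : E ∈ D.lowerCovers ↔ D ∈ E.upperCovers := by
  rw [mem_lowerCovers, mem_upperCovers]

lemma card_upperCovers : #D.upperCovers = #D.lowerCovers + 1 := by
  rw [upperCovers, lowerCovers, card_image_of_injective, card_image_of_injective, card_attach,
    card_attach, card_addableCells]
  · intro c d h
    have hc := (mem_removableCells.1 c.2).1
    exact Subtype.ext ((erase_inj _ ((mem_cells _).2 hc)).1 (congrArg cells h))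
  · intro c d h
    have hc := (mem_addableCells.1 c.2).1
    exact Subtype.ext ((insert_inj (by simpa using hc)).1 (congrArg cells h))

lemma exists_mem_lowerCovers_cells_eq_erase (hc : Maximal (· ∈ D) c) :
    ∃ E ∈ D.lowerCovers, E.cells = D.cells.erase c :=
  ⟨_, mem_image.2 ⟨⟨c, mem_removableCells.2 hc⟩, mem_attach _ _, rfl⟩, rfl⟩

lemma exists_maximal_of_mem_lowerCovers (hE : E ∈ D.lowerCovers) :
    ∃ c, Maximal (· ∈ D) c ∧ E.cells = D.cells.erase c := by
  obtain ⟨⟨c, hc⟩, -, rfl⟩ := mem_image.1 hE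
  exact ⟨c, mem_removableCells.1 hc, rfl⟩

lemma lowerCovers_nonempty (hD : D ≠ ⊥) : D.lowerCovers.Nonempty := by
  obtain ⟨c, hc⟩ := D.cells.exists_maximal
    (card_pos.1 (Nat.pos_of_ne_zero (card_cells_eq_zero_iff.not.2 hD)))
  obtain ⟨E, hE, -⟩ := exists_mem_lowerCovers_cells_eq_erase (c := c) (by simpa using hc)
  exact ⟨E, hE⟩

lemma eq_of_mem_lowerCovers_of_notMem (hE : E ∈ D.lowerCovers) {x y : ℕ × ℕ}
    (hx : x ∈ D.cells) (hxE : x ∉ E.cells) (hy : y ∈ D.cells) (hyE : y ∉ E.cells) :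
    x = y := by
  obtain ⟨c, -, hc⟩ := exists_maximal_of_mem_lowerCovers hE
  simp only [hc, mem_erase, ne_eq, hx, hy, and_true, not_not] at hxE hyE
  exact hxE.trans hyE.symm

-- The only possible common upper (lower) cover is `D ⊔ E` (`D ⊓ E`), and their sizes add up
-- to `2 * #D.cells`.
lemma card_upperCovers_inter (hne : D ≠ E) (hcard : #D.cells = #E.cells) :
    #(D.upperCovers ∩ E.upperCovers) = #(D.lowerCovers ∩ E.lowerCovers) := by
  have hsum : #(D ⊔ E).cells + #(D ⊓ E).cells = 2 * #D.cells := by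
    rw [cells_sup, cells_inf, card_union_add_card_inter]; omega
  have hsup : #D.cells < #(D ⊔ E).cells := by
    by_contra! h
    have hD := eq_of_le_of_card_cells_le le_sup_left h
    exact hne (hD.trans (eq_of_le_of_card_cells_le le_sup_right (by omega)).symm)
  by_cases hs : #(D ⊔ E).cells = #D.cells + 1
  · have hup : D.upperCovers ∩ E.upperCovers = {D ⊔ E} := by
      ext F
      simp only [mem_inter, mem_upperCovers, mem_singleton]
      refine ⟨fun ⟨⟨hDF, hF⟩, hEF, _⟩ => ?_, ?_⟩
      · exact (eq_of_le_of_card_cells_le (sup_le hDF hEF) (by omega)).symm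
      · rintro rfl
        exact ⟨⟨le_sup_left, by omega⟩, le_sup_right, by omega⟩
    have hdown : D.lowerCovers ∩ E.lowerCovers = {D ⊓ E} := by
      ext G
      simp only [mem_inter, mem_lowerCovers, mem_singleton]
      refine ⟨fun ⟨⟨hGD, hG⟩, hGE, _⟩ => ?_, ?_⟩
      · exact eq_of_le_of_card_cells_le (le_inf hGD hGE) (by omega)
      · rintro rfl
        exact ⟨⟨inf_le_left, by omega⟩, inf_le_right, by omega⟩
    rw [hup, hdown, card_singleton, card_singleton]
  · have hup : D.upperCovers ∩ E.upperCovers = ∅ := by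
      refine eq_empty_of_forall_notMem fun F hF => ?_
      simp only [mem_inter, mem_upperCovers] at hF
      have := card_cells_le_of_le (sup_le hF.1.1 hF.2.1)
      omega
    have hdown : D.lowerCovers ∩ E.lowerCovers = ∅ := by
      refine eq_empty_of_forall_notMem fun G hG => ?_
      simp only [mem_inter, mem_lowerCovers] at hG
      have := card_cells_le_of_le (le_inf hG.1.1 hG.2.1)
      omega
    rw [hup, hdown]

def level : ℕ → Finset YoungDiagram
  | 0 => {⊥}
  | n + 1 => (level n).biUnion upperCovers

lemma mem_level {n : ℕ} : D ∈ level n ↔ #D.cells = n := by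
  induction n generalizing D with
  | zero =>
    rw [level, mem_singleton, card_cells_eq_zero_iff]
  | succ n ih =>
    simp only [level, mem_biUnion, ih]
    constructor
    · rintro ⟨E, rfl, hE⟩
      exact (mem_upperCovers.1 hE).2.symm
    · intro hD
      obtain ⟨E, hE⟩ := lowerCovers_nonempty (ne_bot_of_card_cells_eq_succ hD)
      have hE' := mem_lowerCovers.1 hE
      exact ⟨E, by omega, mem_lowerCovers_iff_mem_upperCovers.1 hE⟩

lemma strictMono_iff_row_col {α : Type*} [Preorder α] {T : D.cells → α} :
    StrictMono T ↔ (∀ c d : D.cells, c.1.1 = d.1.1 → c.1.2 < d.1.2 → T c < T d) ∧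
      (∀ c d : D.cells, c.1.2 = d.1.2 → c.1.1 < d.1.1 → T c < T d) := by
  refine ⟨fun hT => ⟨fun c d h1 h2 => hT (Prod.lt_iff.2 (.inr ⟨h1.le, h2⟩)),
    fun c d h2 h1 => hT (Prod.lt_iff.2 (.inl ⟨h1, h2.le⟩))⟩, ?_⟩
  rintro ⟨hrow, hcol⟩ c d hcd
  have hle : c.1.1 ≤ d.1.1 ∧ c.1.2 ≤ d.1.2 := Prod.le_def.1 hcd.le
  -- pass from `c` to `d` through the cell in the row of `c` and the column of `d`
  let e : D.cells :=
    ⟨(c.1.1, d.1.2), (mem_cells _).2 (D.up_left_mem hle.1 le_rfl ((mem_cells _).1 d.2))⟩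
  have hce : c ≠ e → T c < T e := fun h =>
    hrow c e rfl (lt_of_le_of_ne hle.2 fun h' => h (Subtype.ext (Prod.ext rfl h')))
  have hed : e ≠ d → T e < T d := fun h =>
    hcol e d rfl (lt_of_le_of_ne hle.1 fun h' => h (Subtype.ext (Prod.ext h' rfl)))
  by_cases h1 : c = e <;> by_cases h2 : e = d
  · exact absurd (h1.trans h2) hcd.ne
  · rw [h1]; exact hed h2
  · rw [← h2]; exact hce h1
  · exact (hce h1).trans (hed h2)

def StdTableau (D : YoungDiagram) (n : ℕ) : Type :=
  {T : D.cells → Fin n // Function.Bijective T ∧ StrictMono T}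

instance (D : YoungDiagram) (n : ℕ) : Finite (D.StdTableau n) := by
  unfold StdTableau; infer_instance

namespace StdTableau

variable {m : ℕ}

def extendFun (E : YoungDiagram) (T : E.cells → Fin m) (c : D.cells) : Fin (m + 1) :=
  if h : c.1 ∈ E.cells then (T ⟨c.1, h⟩).castSucc else Fin.last m

lemma extendFun_of_mem {T : E.cells → Fin m} {c : D.cells} (h : c.1 ∈ E.cells) :
    extendFun E T c = (T ⟨c.1, h⟩).castSucc := dif_pos h

lemma extendFun_of_notMem {T : E.cells → Fin m} {c : D.cells} (h : c.1 ∉ E.cells) :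
    extendFun E T c = Fin.last m := dif_neg h

lemma extendFun_ne_last_iff {T : E.cells → Fin m} {c : D.cells} :
    extendFun E T c ≠ Fin.last m ↔ c.1 ∈ E.cells := by
  by_cases h : c.1 ∈ E.cells
  · simp [extendFun_of_mem h, h, Fin.castSucc_ne_last]
  · simp [extendFun_of_notMem h, h]

lemma bijective_extendFun (hE : E ∈ D.lowerCovers) {T : E.cells → Fin m}
    (hT : Function.Bijective T) : Function.Bijective (extendFun E T : D.cells → _) := by
  refine (Fintype.bijective_iff_injective_and_card _).2 ⟨fun a b hab => ?_, ?_⟩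
  · by_cases ha : a.1 ∈ E.cells <;> by_cases hb : b.1 ∈ E.cells
    · rw [extendFun_of_mem ha, extendFun_of_mem hb] at hab
      exact Subtype.ext (Subtype.mk.inj (hT.1 (Fin.castSucc_injective m hab)))
    · exact absurd hab (extendFun_ne_last_iff.2 ha ∘ (·.trans (extendFun_of_notMem hb)))
    · exact absurd hab.symm (extendFun_ne_last_iff.2 hb ∘ (·.trans (extendFun_of_notMem ha)))
    · exact Subtype.ext (eq_of_mem_lowerCovers_of_notMem hE a.2 ha b.2 hb)
  · have hEm : #E.cells = m := by simpa using Fintype.card_of_bijective hT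
    simp [← (mem_lowerCovers.1 hE).2, hEm]

lemma strictMono_extendFun (hE : E ∈ D.lowerCovers) {T : E.cells → Fin m} (hT : StrictMono T) :
    StrictMono (extendFun E T : D.cells → _) := by
  intro c d hcd
  have hc : c.1 ∈ E.cells := by
    by_contra hc
    by_cases hd : d.1 ∈ E.cells
    · exact hc ((mem_cells _).2 (E.isLowerSet hcd.le ((mem_cells _).1 hd)))
    · exact hcd.ne (Subtype.ext (eq_of_mem_lowerCovers_of_notMem hE c.2 hc d.2 hd))
  rw [extendFun_of_mem hc]
  by_cases hd : d.1 ∈ E.cells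
  · rw [extendFun_of_mem hd, Fin.castSucc_lt_castSucc_iff]
    exact hT (show c.1 < d.1 from hcd)
  · rw [extendFun_of_notMem hd]
    exact Fin.castSucc_lt_last _

def extend (hE : E ∈ D.lowerCovers) (T : E.StdTableau m) : D.StdTableau (m + 1) :=
  ⟨extendFun E T.1, bijective_extendFun hE T.2.1, strictMono_extendFun hE T.2.2⟩

lemma extend_sigma_injective :
    Function.Injective fun T : Σ E : D.lowerCovers, E.1.StdTableau m => extend T.1.2 T.2 := by
  rintro ⟨⟨E, hE⟩, T⟩ ⟨⟨F, hF⟩, S⟩ h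
  have hfun : extendFun E T.1 = (extendFun F S.1 : D.cells → _) := congrArg Subtype.val h
  have hEsub := cells_subset_iff.2 (mem_lowerCovers.1 hE).1
  have hFsub := cells_subset_iff.2 (mem_lowerCovers.1 hF).1
  have hEF : E = F := by
    refine YoungDiagram.ext (Finset.ext fun x => ⟨fun hx => ?_, fun hx => ?_⟩)
    · have := (extendFun_ne_last_iff (T := T.1) (c := ⟨x, hEsub hx⟩)).2 hx
      exact extendFun_ne_last_iff.1 (hfun ▸ this)
    · have := (extendFun_ne_last_iff (T := S.1) (c := ⟨x, hFsub hx⟩)).2 hx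
      exact extendFun_ne_last_iff.1 (hfun ▸ this)
  subst hEF
  have hTS : T = S := by
    refine Subtype.ext (funext fun c => Fin.castSucc_injective m ?_)
    have := congrFun hfun ⟨c.1, hEsub c.2⟩
    rwa [extendFun_of_mem (c := ⟨c.1, hEsub c.2⟩) c.2,
      extendFun_of_mem (c := ⟨c.1, hEsub c.2⟩) c.2] at this
  rw [hTS]

lemma extend_sigma_surjective :
    Function.Surjective fun T : Σ E : D.lowerCovers, E.1.StdTableau m => extend T.1.2 T.2 := by
  intro T
  obtain ⟨c₀, hc₀⟩ := T.2.1.2 (Fin.last m)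
  have hmax : Maximal (· ∈ D) c₀.1 := ⟨(mem_cells _).1 c₀.2, fun d hd hcd => by
    by_contra hdc
    have := T.2.2 (show c₀ < ⟨d, (mem_cells _).2 hd⟩ from lt_of_le_not_ge hcd hdc)
    exact (hc₀ ▸ this).not_ge (Fin.le_last _)⟩
  obtain ⟨E, hE, hEc⟩ := exists_mem_lowerCovers_cells_eq_erase hmax
  have hsub : E.cells ⊆ D.cells := cells_subset_iff.2 (mem_lowerCovers.1 hE).1
  have hne : ∀ x : E.cells, T.1 ⟨x, hsub x.2⟩ ≠ Fin.last m := fun x h => by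
    have hx : x.1 ∈ D.cells.erase c₀ := hEc ▸ x.2
    exact (mem_erase.1 hx).1 (Subtype.mk.inj (T.2.1.1 (h.trans hc₀.symm)))
  let T' : E.cells → Fin m := fun x => (T.1 ⟨x, hsub x.2⟩).castPred (hne x)
  have hT' : Function.Bijective T' := by
    refine (Fintype.bijective_iff_injective_and_card _).2 ⟨fun a b hab => ?_, ?_⟩
    · exact Subtype.ext (Subtype.mk.inj (T.2.1.1 (Fin.castPred_inj.1 hab)))
    · have hD : #D.cells = m + 1 := by simpa using Fintype.card_of_bijective T.2.1
      simp [hEc, card_erase_of_mem c₀.2, hD]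
  have hT'mono : StrictMono T' := fun a b hab =>
    Fin.castPred_lt_castPred_iff.2 (T.2.2 (show a.1 < b.1 from hab))
  refine ⟨⟨⟨E, hE⟩, T', hT', hT'mono⟩, Subtype.ext (funext fun c => ?_)⟩
  by_cases hc : c.1 ∈ E.cells
  · exact (extendFun_of_mem hc).trans (Fin.castSucc_castPred _ (hne ⟨c.1, hc⟩))
  · have : c = c₀ := Subtype.ext (by simpa [hEc, c.2] using hc)
    exact (extendFun_of_notMem hc).trans (this ▸ hc₀.symm)

lemma card_succ :
    Nat.card (D.StdTableau (m + 1)) = ∑ E ∈ D.lowerCovers, Nat.card (E.StdTableau m) := by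
  rw [← Nat.card_eq_of_bijective _ ⟨extend_sigma_injective, extend_sigma_surjective⟩,
    Nat.card_sigma, sum_coe_sort D.lowerCovers fun E => Nat.card (E.StdTableau m)]

end StdTableau

lemma sum_sum_lowerCovers_comm {M : Type*} [AddCommMonoid M] {S : Finset YoungDiagram} {n : ℕ}
    (hS : ∀ E ∈ S, #E.cells = n + 1) (f : YoungDiagram → YoungDiagram → M) :
    ∑ E ∈ S, ∑ F ∈ E.lowerCovers, f E F =
      ∑ F ∈ level n, ∑ E ∈ S ∩ F.upperCovers, f E F := by
  refine sum_comm' fun E F => ?_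
  rw [mem_inter, mem_level, ← mem_lowerCovers_iff_mem_upperCovers]
  refine ⟨fun ⟨hE, hF⟩ => ⟨⟨hE, hF⟩, ?_⟩, fun ⟨h, _⟩ => h⟩
  have := (mem_lowerCovers.1 hF).2
  have := hS E hE
  omega

lemma sum_sum_upperCovers_comm {M : Type*} [AddCommMonoid M] {S : Finset YoungDiagram} {n : ℕ}
    (hS : ∀ G ∈ S, #G.cells + 1 = n) (f : YoungDiagram → YoungDiagram → M) :
    ∑ G ∈ S, ∑ F ∈ G.upperCovers, f G F =
      ∑ F ∈ level n, ∑ G ∈ S ∩ F.lowerCovers, f G F := by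
  refine sum_comm' fun G F => ?_
  rw [mem_inter, mem_level, mem_lowerCovers_iff_mem_upperCovers]
  refine ⟨fun ⟨hG, hF⟩ => ⟨⟨hG, hF⟩, ?_⟩, fun ⟨h, _⟩ => h⟩
  have := (mem_upperCovers.1 hF).2
  have := hS G hG
  omega

noncomputable def numSyt (D : YoungDiagram) : ℕ := Nat.card (D.StdTableau #D.cells)

lemma numSyt_bot : numSyt ⊥ = 1 := by
  have : IsEmpty (⊥ : YoungDiagram).cells := ⟨fun c => notMem_bot c.1 ((mem_cells _).1 c.2)⟩
  rw [numSyt, cells_bot, card_empty, Nat.card_eq_one_iff_unique]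
  refine ⟨⟨fun T S => Subtype.ext (funext isEmptyElim)⟩, ⟨isEmptyElim, ?_, ?_⟩⟩
  · exact ⟨fun a => isEmptyElim a, fun b => b.elim0⟩
  · exact fun a => isEmptyElim a

lemma numSyt_eq_sum_lowerCovers (hD : D ≠ ⊥) :
    D.numSyt = ∑ E ∈ D.lowerCovers, E.numSyt := by
  obtain ⟨m, hm⟩ := Nat.exists_eq_succ_of_ne_zero (card_cells_eq_zero_iff.not.2 hD)
  rw [numSyt, hm, StdTableau.card_succ]
  refine sum_congr rfl fun E hE => ?_
  have := (mem_lowerCovers.1 hE).2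
  rw [numSyt, show #E.cells = m by omega]

lemma sum_numSyt_upperCovers (D : YoungDiagram) :
    ∑ E ∈ D.upperCovers, E.numSyt = (#D.cells + 1) * D.numSyt := by
  induction hn : #D.cells using Nat.strong_induction_on generalizing D with
  | _ n ih =>
  have hDn : D ∈ level n := mem_level.2 hn
  have hcov : #D.upperCovers = #D.lowerCovers + 1 := card_upperCovers
  have hlower : ∀ G ∈ D.lowerCovers, #G.cells + 1 = n := fun G hG =>
    hn ▸ (mem_lowerCovers.1 hG).2
  calc ∑ E ∈ D.upperCovers, E.numSyt
      = ∑ E ∈ D.upperCovers, ∑ F ∈ E.lowerCovers, F.numSyt :=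
        sum_congr rfl fun E hE =>
          numSyt_eq_sum_lowerCovers (ne_bot_of_card_cells_eq_succ (mem_upperCovers.1 hE).2.symm)
    _ = ∑ F ∈ level n, #(D.upperCovers ∩ F.upperCovers) * F.numSyt := by
        rw [sum_sum_lowerCovers_comm (fun E hE => hn ▸ (mem_upperCovers.1 hE).2.symm)]
        simp only [sum_const, smul_eq_mul]
    _ = ∑ F ∈ level n, #(D.lowerCovers ∩ F.lowerCovers) * F.numSyt + D.numSyt := by
        rw [← add_sum_erase _ _ hDn, ← add_sum_erase _ _ hDn, inter_self, inter_self, hcov,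
          add_mul, one_mul, add_right_comm]
        congr 2
        refine sum_congr rfl fun F hF => ?_
        obtain ⟨hFD, hF⟩ := mem_erase.1 hF
        rw [card_upperCovers_inter hFD.symm (hn.trans (mem_level.1 hF).symm)]
    _ = ∑ G ∈ D.lowerCovers, ∑ F ∈ G.upperCovers, F.numSyt + D.numSyt := by
        rw [sum_sum_upperCovers_comm hlower]
        simp only [sum_const, smul_eq_mul]
    _ = n * ∑ G ∈ D.lowerCovers, G.numSyt + D.numSyt := by
        rw [mul_sum]
        congr 1
        refine sum_congr rfl fun G hG => ?_
        rw [ih _ (by have := hlower G hG; omega) G rfl, hlower G hG]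
    _ = (n + 1) * D.numSyt := by
        obtain rfl | hD := eq_or_ne D ⊥
        · simp [← hn]
        · rw [← numSyt_eq_sum_lowerCovers hD, add_one_mul]

theorem sum_level_numSyt_sq (n : ℕ) : ∑ D ∈ level n, D.numSyt ^ 2 = n.factorial := by
  induction n with
  | zero => simp [level, numSyt_bot]
  | succ n ih =>
  calc ∑ D ∈ level (n + 1), D.numSyt ^ 2
      = ∑ D ∈ level (n + 1), ∑ E ∈ D.lowerCovers, D.numSyt * E.numSyt := by
        refine sum_congr rfl fun D hD => ?_
        have hD := ne_bot_of_card_cells_eq_succ (mem_level.1 hD)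
        rw [← mul_sum, ← numSyt_eq_sum_lowerCovers hD, sq]
    _ = ∑ E ∈ level n, E.numSyt * ∑ D ∈ E.upperCovers, D.numSyt := by
        rw [sum_sum_lowerCovers_comm (fun D hD => mem_level.1 hD)]
        refine sum_congr rfl fun E hE => ?_
        rw [mul_sum, inter_eq_right.2 fun D hD => ?_]
        · exact sum_congr rfl fun D _ => mul_comm _ _
        · rw [mem_level, ← (mem_upperCovers.1 hD).2, mem_level.1 hE]
    _ = (n + 1) * ∑ E ∈ level n, E.numSyt ^ 2 := by
        rw [mul_sum]
        refine sum_congr rfl fun E hE => ?_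
        rw [sum_numSyt_upperCovers, mem_level.1 hE]
        ring
    _ = (n + 1).factorial := by rw [ih, Nat.factorial_succ]

end YoungDiagram

namespace Nat.Partition

variable {n : ℕ} (p : n.Partition)

lemma card_parts_le : Multiset.card p.parts ≤ n := by
  simpa [p.parts_sum] using Multiset.card_nsmul_le_sum (a := 1) fun _ => p.parts_pos

lemma card_filter_parts_le (q : ℕ → Prop) [DecidablePred q] :
    Multiset.card (p.parts.filter q) ≤ n :=
  (Multiset.card_le_card (Multiset.filter_le _ _)).trans p.card_parts_le

lemma mem_cellsOf {c : ℕ × ℕ} :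
    c ∈ cellsOf p ↔ c.1 < Multiset.card (p.parts.filter (c.2 < ·)) := by
  rw [cellsOf, mem_filter, mem_product, mem_range, mem_range, and_iff_right_iff_imp]
  intro h
  obtain ⟨a, ha⟩ := Multiset.card_pos_iff_exists_mem.1 (c.1.zero_le.trans_lt h)
  rw [Multiset.mem_filter] at ha
  exact ⟨h.trans_le (p.card_filter_parts_le _), ha.2.trans_le (le_of_mem_parts ha.1)⟩

def toYoungDiagram : YoungDiagram where
  cells := cellsOf p
  isLowerSet c d hdc hc := by
    rw [mem_coe, mem_cellsOf] at hc ⊢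
    refine (Prod.le_def.1 hdc).1.trans_lt (hc.trans_le (Multiset.card_le_card ?_))
    exact Multiset.monotone_filter_right _ fun a (h : c.2 < a) => (Prod.le_def.1 hdc).2.trans_lt h

lemma card_cells_toYoungDiagram : #p.toYoungDiagram.cells = n := by
  change #(cellsOf p) = n
  rw [cellsOf, card_filter, sum_product_right]
  calc _ = ∑ j ∈ range n, Multiset.card (p.parts.filter (j < ·)) := by
        refine sum_congr rfl fun j _ => ?_
        rw [← card_filter]
        exact (card_filter_range_lt _ n).trans (min_eq_right (p.card_filter_parts_le (j < ·)))
    _ = n := by rw [Multiset.sum_range_card_filter_lt fun _ => le_of_mem_parts, p.parts_sum]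

lemma sytCount_eq_numSyt : sytCount p = p.toYoungDiagram.numSyt := by
  rw [YoungDiagram.numSyt, card_cells_toYoungDiagram]
  exact Nat.card_congr (Equiv.subtypeEquivRight fun _ =>
    Iff.rfl.and (YoungDiagram.strictMono_iff_row_col (D := p.toYoungDiagram)).symm)

end Nat.Partition

/-- For any partition `p` of `n`, `(f^p)² ≤ n!`. -/
theorem syt_squared_le_factorial (n : ℕ) (p : Nat.Partition n) :
    sytCount p ^ 2 ≤ n.factorial := by
  rw [p.sytCount_eq_numSyt, ← YoungDiagram.sum_level_numSyt_sq n]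
  exact single_le_sum (f := fun D => D.numSyt ^ 2) (fun _ _ => Nat.zero_le _)
    (YoungDiagram.mem_level.2 p.card_cells_toYoungDiagram)
end

section
/- For partitions λ and μ of n, if λ differs from μ by moving a box from a shorter row to a longer row (so λ dominates μ minimally), then the Kostka number K_{νλ} ≤ K_{νμ} for every partition ν of n. More generally, if μ is dominated by λ in dominance order, then K_{νμ} ≥ K_{νλ}. -/
/-- The `i`-th part (0-indexed) of the partition `p`, parts in decreasing order
(`0` beyond the last part). -/
def partSeq {n : ℕ} (p : Nat.Partition n) (i : ℕ) : ℕ :=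
  ((p.parts.sort (· ≤ ·)).reverse).getD i 0

/-- The Kostka number `K_{νμ}`: the number of semistandard Young tableaux of shape
`ν` and content `μ` (weakly increasing rows, strictly increasing columns, with
`μ_i` entries equal to `i`). -/
noncomputable def kostka {n : ℕ} (ν μ : Nat.Partition n) : ℕ :=
  Nat.card {T : cellsOf ν → Fin n //
    (∀ c d : cellsOf ν, c.1.1 = d.1.1 → c.1.2 < d.1.2 → T c ≤ T d) ∧
    (∀ c d : cellsOf ν, c.1.2 = d.1.2 → c.1.1 < d.1.1 → T c < T d) ∧
    ∀ i : Fin n, (Finset.univ.filter fun c => T c = i).card = partSeq μ (i : ℕ)}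

/-- Dominance order on partitions of `n`: `μ ⊴ l` iff all prefix sums of `μ`
are at most those of `l`. -/
def Dominates {n : ℕ} (l μ : Nat.Partition n) : Prop :=
  ∀ i : ℕ, ∑ j ∈ Finset.range i, partSeq μ j ≤ ∑ j ∈ Finset.range i, partSeq l j

/-!
Allow an arbitrary content `c`. If `c (r + 1) < c r`, a crystal lowering operator injects the
tableaux of content `c` into those of content `c - e_r + e_(r+1)`: reading the columns from left
to right, each `r` a closing and each `r + 1` an opening bracket, it turns the entry `r` of the
rightmost unpaired column into `r + 1`; that entry is then the leftmost unpaired `r + 1`, so the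
change can be undone.

If `c` dominates `μ` and `c ≠ μ`, then `c d > μ d` at the first index `d` where they differ, and
up to the first descent `t ≥ d` of `c` the prefix sums of `c` stay strictly above those of `μ`.
Moving one unit from `t` to `t + 1` thus keeps `c` dominating `μ` while lowering a prefix sum, and
`K_{ν,c}` can only grow along the way from `λ` to `μ`.
-/

open Finset

section Brackets

theorem sum_Icc_add_sum_Icc {M : Type*} [AddCommMonoid M] (f : ℕ → M) {a m b : ℕ}
    (ham : a ≤ m + 1) (hmb : m ≤ b) :
    ∑ i ∈ Icc a m, f i + ∑ i ∈ Icc (m + 1) b, f i = ∑ i ∈ Icc a b, f i := by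
  simp only [← Ico_add_one_right_eq_Icc]
  exact sum_Ico_consecutive f ham (by omega)

/-- Position `i` carries `p i` closing and `q i` opening brackets. -/
def IsUnpairedClose (p q : ℕ → ℕ) (j : ℕ) : Prop :=
  ∀ k ≤ j, ∑ i ∈ Icc k j, q i < ∑ i ∈ Icc k j, p i

def IsUnpairedOpen (p q : ℕ → ℕ) (j : ℕ) : Prop :=
  ∀ k, j ≤ k → ∑ i ∈ Icc j k, p i < ∑ i ∈ Icc j k, q i

def IsLastUnpairedClose (p q : ℕ → ℕ) (j : ℕ) : Prop :=
  IsUnpairedClose p q j ∧ ∀ j', j < j' → ¬ IsUnpairedClose p q j'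

variable {p q p' q' : ℕ → ℕ} {j : ℕ}

theorem exists_unpairedClose_of_sum_lt {a b : ℕ}
    (h : ∑ i ∈ Icc a b, q i < ∑ i ∈ Icc a b, p i) :
    ∃ j, a ≤ j ∧ j ≤ b ∧ ∀ k, a ≤ k → k ≤ j → ∑ i ∈ Icc k j, q i < ∑ i ∈ Icc k j, p i := by
  induction b using Nat.strong_induction_on with
  | _ b ih =>
  by_cases hb : ∀ k, a ≤ k → k ≤ b → ∑ i ∈ Icc k b, q i < ∑ i ∈ Icc k b, p i
  · refine ⟨b, ?_, le_rfl, hb⟩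
    by_contra! hba
    simp [Icc_eq_empty_of_lt hba] at h
  push Not at hb
  obtain ⟨k, hak, hkb, hk⟩ := hb
  have hka : a < k := lt_of_le_of_ne hak (by rintro rfl; omega)
  obtain ⟨m, rfl⟩ : ∃ m, k = m + 1 := ⟨k - 1, by omega⟩
  have hwin : ∑ i ∈ Icc a m, q i < ∑ i ∈ Icc a m, p i := by
    rw [← sum_Icc_add_sum_Icc q (m := m) (by omega) (by omega),
      ← sum_Icc_add_sum_Icc p (m := m) (by omega) (by omega)] at h
    omega
  obtain ⟨j, haj, hjm, hj⟩ := ih m (by omega) hwin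
  exact ⟨j, haj, by omega, hj⟩

theorem IsUnpairedClose.sum_lt (h : IsUnpairedClose p q j) : q j < p j := by
  simpa using h j le_rfl

theorem exists_isLastUnpairedClose {N : ℕ} (hp : ∀ i, N ≤ i → p i = 0)
    (h : IsUnpairedClose p q j) : ∃ j, IsLastUnpairedClose p q j := by
  classical
  have hlt : ∀ j', IsUnpairedClose p q j' → j' < N := fun j' hj' => by
    by_contra! hN
    simpa [hp j' hN] using hj'.sum_lt
  refine ⟨Nat.findGreatest (IsUnpairedClose p q) N, Nat.findGreatest_spec (hlt j h).le h,
    fun j' hj' hj'' => Nat.findGreatest_is_greatest hj' (hlt j' hj'').le hj''⟩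

theorem IsLastUnpairedClose.sum_Icc_le (h : IsLastUnpairedClose p q j) (k : ℕ) :
    ∑ i ∈ Icc (j + 1) k, p i ≤ ∑ i ∈ Icc (j + 1) k, q i := by
  by_contra! hk
  obtain ⟨j', hj', hj'k, hwin⟩ := exists_unpairedClose_of_sum_lt hk
  refine h.2 j' (by omega) fun k' hk' => ?_
  rcases le_or_gt (j + 1) k' with hjk' | hk'j
  · exact hwin k' hjk' hk'
  · rw [← sum_Icc_add_sum_Icc q (m := j) (by omega) (by omega),
      ← sum_Icc_add_sum_Icc p (m := j) (by omega) (by omega)]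
    have := h.1 k' (by omega)
    have := hwin (j + 1) le_rfl hj'
    omega

theorem sum_Icc_congr_of_notMem {f f' : ℕ → ℕ} (hf : ∀ i ≠ j, f' i = f i) {a b : ℕ}
    (hj : j ∉ Icc a b) : ∑ i ∈ Icc a b, f' i = ∑ i ∈ Icc a b, f i :=
  sum_congr rfl fun i hi => hf i (by rintro rfl; exact hj hi)

/-- Turning the last unpaired closing bracket into an opening one makes it an unpaired opening
bracket. -/
theorem IsLastUnpairedClose.isUnpairedOpen_of_flip (h : IsLastUnpairedClose p q j)
    (hj : p' j < q' j) (hp : ∀ i ≠ j, p' i = p i) (hq : ∀ i ≠ j, q' i = q i) :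
    IsUnpairedOpen p' q' j := by
  intro k hk
  have hnot : j ∉ Icc (j + 1) k := by simp
  rw [← sum_Icc_add_sum_Icc p' (by omega) hk, ← sum_Icc_add_sum_Icc q' (by omega) hk]
  simp only [Icc_self, sum_singleton, sum_Icc_congr_of_notMem hp hnot,
    sum_Icc_congr_of_notMem hq hnot]
  have := h.sum_Icc_le k
  omega

theorem IsUnpairedClose.not_isUnpairedOpen_of_flip (h : IsUnpairedClose p q j)
    (hj : p j ≤ q j + 1) (hp : ∀ i ≠ j, p' i = p i) (hq : ∀ i ≠ j, q' i = q i) {k : ℕ}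
    (hk : k < j) : ¬ IsUnpairedOpen p' q' k := by
  obtain ⟨m, rfl⟩ : ∃ m, j = m + 1 := ⟨j - 1, by omega⟩
  intro hopen
  have hwin := h k (by omega)
  rw [sum_Icc_succ_top (by omega), sum_Icc_succ_top (by omega)] at hwin
  have hopen := hopen m (by omega)
  have hnot : m + 1 ∉ Icc k m := by simp
  rw [sum_Icc_congr_of_notMem hp hnot, sum_Icc_congr_of_notMem hq hnot] at hopen
  omega

end Brackets

section Partitions

theorem List.Pairwise.antitone_getD {l : List ℕ} (hl : l.Pairwise (· ≥ ·)) :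
    Antitone (l.getD · 0) := by
  intro i j hij
  by_cases hj : j < l.length
  · simp only [List.getD_eq_getElem _ _ hj, List.getD_eq_getElem _ _ (hij.trans_lt hj)]
    exact hl.rel_get_of_le (a := ⟨i, hij.trans_lt hj⟩) (b := ⟨j, hj⟩) hij
  · simp only [List.getD_eq_default _ _ (not_lt.mp hj), zero_le]

theorem List.sum_range_getD {M : Type*} [AddCommMonoid M] (l : List M) {N : ℕ}
    (hN : l.length ≤ N) : ∑ i ∈ Finset.range N, l.getD i 0 = l.sum := by
  induction l generalizing N with
  | nil => simp
  | cons a t ih =>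
    obtain ⟨N, rfl⟩ : ∃ m, N = m + 1 := ⟨N - 1, by simp only [List.length_cons] at hN; omega⟩
    rw [Finset.sum_range_succ', List.sum_cons, add_comm a]
    simp only [List.getD_cons_succ, List.getD_cons_zero]
    rw [ih (by simpa using hN)]

theorem Nat.Partition.card_parts_le_s13 {n : ℕ} (p : Nat.Partition n) :
    Multiset.card p.parts ≤ n := by
  simpa [p.parts_sum] using Multiset.card_nsmul_le_sum fun x hx => p.parts_pos hx

variable {n : ℕ}

theorem partSeq_antitone (p : Nat.Partition n) : Antitone (partSeq p) :=
  List.Pairwise.antitone_getD (List.pairwise_reverse.mpr (Multiset.pairwise_sort p.parts _))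

theorem sum_range_partSeq (p : Nat.Partition n) : ∑ i ∈ range n, partSeq p i = n := by
  have hsort : ((p.parts.sort (· ≤ ·) : List ℕ) : Multiset ℕ).sum = n := by
    rw [Multiset.sort_eq, p.parts_sum]
  rw [Multiset.sum_coe, ← List.sum_reverse] at hsort
  exact (List.sum_range_getD _ (by simpa using p.card_parts_le_s13)).trans hsort

end Partitions

section Tableaux

variable {n : ℕ} {ν : Nat.Partition n}

theorem col_lt_of_mem_cellsOf {c : ℕ × ℕ} (hc : c ∈ cellsOf ν) : c.2 < n := by
  simp only [cellsOf, mem_filter, mem_product, mem_range] at hc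
  exact hc.1.2

def leftCell (c : cellsOf ν) (j : ℕ) (hj : j ≤ c.1.2) : cellsOf ν :=
  ⟨(c.1.1, j), by
    have hc := c.2
    simp only [cellsOf, mem_filter, mem_product, mem_range] at hc ⊢
    exact ⟨⟨hc.1.1, by omega⟩, hc.2.trans_le (Multiset.card_le_card
      (Multiset.monotone_filter_right _ fun a ha => hj.trans_lt ha))⟩⟩

def RowsWeaklyIncrease (T : cellsOf ν → Fin n) : Prop :=
  ∀ c d : cellsOf ν, c.1.1 = d.1.1 → c.1.2 < d.1.2 → T c ≤ T d

theorem RowsWeaklyIncrease.apply_le {T : cellsOf ν → Fin n} (hT : RowsWeaklyIncrease T)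
    {c d : cellsOf ν} (hrow : c.1.1 = d.1.1) (hcol : c.1.2 ≤ d.1.2) : T c ≤ T d := by
  rcases hcol.lt_or_eq with hlt | heq
  · exact hT c d hrow hlt
  · exact (congrArg T (Subtype.ext (Prod.ext hrow heq))).le

def ColsStrictlyIncrease (T : cellsOf ν → Fin n) : Prop :=
  ∀ c d : cellsOf ν, c.1.2 = d.1.2 → c.1.1 < d.1.1 → T c < T d

/-- Only `c 0, …, c (n - 1)` matter, as the entries lie in `Fin n`. -/
abbrev Tableau (ν : Nat.Partition n) (c : ℕ → ℕ) : Type :=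
  {T : cellsOf ν → Fin n // RowsWeaklyIncrease T ∧ ColsStrictlyIncrease T ∧
    ∀ i : Fin n, #{x | T x = i} = c i}

/-- `kostka ν μ` is `kostkaComp ν (partSeq μ)` by definition. -/
noncomputable def kostkaComp (ν : Nat.Partition n) (c : ℕ → ℕ) : ℕ :=
  Nat.card (Tableau ν c)

theorem kostkaComp_congr {c c' : ℕ → ℕ} (h : ∀ i < n, c i = c' i) :
    kostkaComp ν c = kostkaComp ν c' :=
  Nat.card_congr <| Equiv.subtypeEquivRight fun T => by
    simp only [fun i : Fin n => h i i.isLt]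

def column (ν : Nat.Partition n) (j : ℕ) : Finset (cellsOf ν) := {x | x.1.2 = j}

def colCount (T : cellsOf ν → Fin n) (u : Fin n) (j : ℕ) : ℕ := #{x ∈ column ν j | T x = u}

variable {T : cellsOf ν → Fin n} {u : Fin n} {j : ℕ}

theorem card_filter_eq_sum_colCount (T : cellsOf ν → Fin n) (u : Fin n) :
    #{x | T x = u} = ∑ j ∈ Icc 0 n, colCount T u j := by
  rw [card_eq_sum_card_fiberwise (f := fun x : cellsOf ν => x.1.2) (t := Icc 0 n)
    fun x _ => mem_Icc.2 ⟨Nat.zero_le _, (col_lt_of_mem_cellsOf x.2).le⟩]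
  simp only [colCount, column, filter_filter, and_comm]

theorem colCount_pos_iff : 0 < colCount T u j ↔ ∃ x : cellsOf ν, x.1.2 = j ∧ T x = u := by
  simp [colCount, column, card_pos, filter_nonempty_iff]

theorem colCount_eq_zero_of_le (hj : n ≤ j) : colCount T u j = 0 := by
  by_contra h
  obtain ⟨x, rfl, -⟩ := colCount_pos_iff.1 (Nat.pos_of_ne_zero h)
  exact (col_lt_of_mem_cellsOf x.2).not_ge hj

theorem ColsStrictlyIncrease.eq_of_apply_eq (hT : ColsStrictlyIncrease T) {x y : cellsOf ν}
    (hxy : x.1.2 = y.1.2) (h : T x = T y) : x = y := by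
  rcases lt_trichotomy x.1.1 y.1.1 with hlt | heq | hgt
  · exact absurd (hT x y hxy hlt) (h ▸ lt_irrefl _)
  · exact Subtype.ext (Prod.ext heq hxy)
  · exact absurd (hT y x hxy.symm hgt) (h ▸ lt_irrefl _)

theorem ColsStrictlyIncrease.row_lt_of_apply_lt (hT : ColsStrictlyIncrease T) {x y : cellsOf ν}
    (hxy : x.1.2 = y.1.2) (h : T x < T y) : x.1.1 < y.1.1 := by
  by_contra! hyx
  rcases hyx.lt_or_eq with hlt | heq
  · exact (hT y x hxy.symm hlt).not_gt h
  · exact h.ne (congrArg T (Subtype.ext (Prod.ext heq.symm hxy)))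

theorem ColsStrictlyIncrease.colCount_le_one (hT : ColsStrictlyIncrease T) (u : Fin n) (j : ℕ) :
    colCount T u j ≤ 1 :=
  card_le_one.2 fun x hx y hy => by
    simp only [column, mem_filter, mem_univ, true_and] at hx hy
    exact hT.eq_of_apply_eq (hx.1.trans hy.1.symm) (hx.2.trans hy.2.symm)

end Tableaux

section Update

variable {α β : Type*} [DecidableEq α] [DecidableEq β]

-- both sides carry a correction term, so that no truncated subtraction occurs
theorem card_filter_update_add {s : Finset α} {x : α} (hx : x ∈ s) (f : α → β) (w u : β) :
    #{y ∈ s | Function.update f x w y = u} + (if f x = u then 1 else 0) =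
      #{y ∈ s | f y = u} + (if w = u then 1 else 0) := by
  have hsplit (g : α → β) :
      #{y ∈ s | g y = u} =
        ∑ y ∈ s.erase x, (if g y = u then 1 else 0) + if g x = u then 1 else 0 := by
    rw [card_filter, sum_erase_add _ _ hx]
  rw [hsplit, hsplit f, Function.update_self,
    sum_congr rfl fun y hy => by rw [Function.update_of_ne (ne_of_mem_erase hy)]]
  ring

theorem card_filter_update_of_notMem {s : Finset α} {x : α} (hx : x ∉ s) (f : α → β) (w u : β) :
    #{y ∈ s | Function.update f x w y = u} = #{y ∈ s | f y = u} := by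
  rw [filter_congr fun y hy => by rw [Function.update_of_ne (ne_of_mem_of_not_mem hy hx)]]

end Update

section Crystal

open Function

variable {n : ℕ} {ν : Nat.Partition n} {T : cellsOf ν → Fin n} {v w : Fin n} {x : cellsOf ν}

theorem colCount_update_add (T : cellsOf ν → Fin n) (x : cellsOf ν) (w u : Fin n) :
    colCount (update T x w) u x.1.2 + (if T x = u then 1 else 0) =
      colCount T u x.1.2 + (if w = u then 1 else 0) :=
  card_filter_update_add (by simp [column]) T w u

theorem colCount_update_of_ne {j : ℕ} (hj : j ≠ x.1.2) (w u : Fin n) :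
    colCount (update T x w) u j = colCount T u j :=
  card_filter_update_of_notMem (by simpa [column] using Ne.symm hj) T w u

/-- The entry `v` that the crystal operator turns into `w`: the one in the column of the last
unpaired `v`, reading columns from left to right with each `v` a closing and each `w` an opening
bracket. -/
def IsPick (T : cellsOf ν → Fin n) (v w : Fin n) (x : cellsOf ν) : Prop :=
  T x = v ∧ IsLastUnpairedClose (colCount T v) (colCount T w) x.1.2

theorem exists_isPick (h : #{y | T y = w} < #{y | T y = v}) :
    ∃ x, IsPick T v w x := by
  rw [card_filter_eq_sum_colCount, card_filter_eq_sum_colCount] at h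
  obtain ⟨j, -, -, hj⟩ := exists_unpairedClose_of_sum_lt h
  obtain ⟨j, hlast⟩ := exists_isLastUnpairedClose (fun i hi => colCount_eq_zero_of_le hi)
    (fun k hk => hj k (Nat.zero_le k) hk)
  obtain ⟨x, rfl, hx⟩ := colCount_pos_iff.1 (hlast.1.sum_lt.trans_le' (Nat.zero_le _))
  exact ⟨x, hx, hlast⟩

theorem IsPick.colCount_eq_one (hT : ColsStrictlyIncrease T) (hx : IsPick T v w x) :
    colCount T v x.1.2 = 1 := by
  have := hx.2.1.sum_lt
  have := hT.colCount_le_one v x.1.2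
  omega

theorem IsPick.colCount_eq_zero (hT : ColsStrictlyIncrease T) (hx : IsPick T v w x) :
    colCount T w x.1.2 = 0 := by
  have := hx.2.1.sum_lt
  have := hx.colCount_eq_one hT
  omega

theorem IsPick.apply_ne_of_row_eq (hrow : RowsWeaklyIncrease T) (hcol : ColsStrictlyIncrease T)
    (hvw : (w : ℕ) = v + 1) (hx : IsPick T v w x) {d : cellsOf ν} (hd : d.1.1 = x.1.1)
    (hlt : x.1.2 < d.1.2) : T d ≠ v := by
  intro hdv
  let y := leftCell d (x.1.2 + 1) hlt
  have hy : T y = v :=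
    le_antisymm (hdv ▸ hrow.apply_le rfl (by simp only [y, leftCell]; omega))
      (hx.1 ▸ hrow x y hd.symm (by simp [y, leftCell]))
  -- the `v` at `y` is paired, so the column of `y` also holds a `w`, necessarily below `y`
  have hw : 0 < colCount T w (x.1.2 + 1) := by
    have := hx.2.sum_Icc_le (x.1.2 + 1)
    simp only [Icc_self, sum_singleton] at this
    exact ((colCount_pos_iff (j := x.1.2 + 1)).2 ⟨y, rfl, hy⟩).trans_le this
  obtain ⟨z, hzj, hz⟩ := colCount_pos_iff.1 hw
  have hyz : y.1.1 < z.1.1 :=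
    hcol.row_lt_of_apply_lt hzj.symm (by rw [hy, hz, Fin.lt_def]; omega)
  -- the cell left of `z` in the column of `x` lies below `x`, so it holds a `w`, which the
  -- column of an unpaired `v` cannot
  let z' := leftCell z x.1.2 (by omega)
  have hz' : T z' = w := by
    have h1 : T x < T z' := hcol x z' rfl (by simpa [z', leftCell, y, hd] using hyz)
    have h2 : T z' ≤ T z := hrow.apply_le rfl (by simp only [z', leftCell]; omega)
    rw [hx.1, Fin.lt_def] at h1
    rw [hz, Fin.le_def] at h2
    exact Fin.ext (by omega)
  have := (colCount_pos_iff (j := x.1.2)).2 ⟨z', rfl, hz'⟩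
  rw [hx.colCount_eq_zero hcol] at this
  exact this.false

theorem IsPick.rowsWeaklyIncrease_update (hrow : RowsWeaklyIncrease T)
    (hcol : ColsStrictlyIncrease T) (hvw : (w : ℕ) = v + 1) (hx : IsPick T v w x) :
    RowsWeaklyIncrease (update T x w) := by
  intro c d hcd hlt
  rcases eq_or_ne c x with hc | hc <;> rcases eq_or_ne d x with hd | hd
  · subst hc hd
    exact absurd hlt (lt_irrefl _)
  · subst hc
    rw [update_self, update_of_ne hd]
    have h1 := hrow c d hcd hlt
    have h2 := hx.apply_ne_of_row_eq hrow hcol hvw hcd.symm hlt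
    rw [hx.1, Fin.le_def] at h1
    rw [Fin.le_def]
    have := Fin.val_ne_of_ne h2
    omega
  · subst hd
    rw [update_self, update_of_ne hc]
    have h1 := hrow c d hcd hlt
    rw [hx.1, Fin.le_def] at h1
    rw [Fin.le_def]
    omega
  · rw [update_of_ne hc, update_of_ne hd]
    exact hrow c d hcd hlt

theorem IsPick.colsStrictlyIncrease_update (hcol : ColsStrictlyIncrease T)
    (hvw : (w : ℕ) = v + 1) (hx : IsPick T v w x) : ColsStrictlyIncrease (update T x w) := by
  intro c d hcd hlt
  rcases eq_or_ne c x with hc | hc <;> rcases eq_or_ne d x with hd | hd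
  · subst hc hd
    exact absurd hlt (lt_irrefl _)
  · subst hc
    rw [update_self, update_of_ne hd]
    have h1 := hcol c d hcd hlt
    have h2 : T d ≠ w := fun hdw => by
      have := colCount_pos_iff.2 ⟨d, hcd.symm, hdw⟩
      rw [hx.colCount_eq_zero hcol] at this
      exact this.false
    rw [hx.1, Fin.lt_def] at h1
    rw [Fin.lt_def]
    have := Fin.val_ne_of_ne h2
    omega
  · subst hd
    rw [update_self, update_of_ne hc]
    have h1 := hcol c d hcd hlt
    rw [hx.1, Fin.lt_def] at h1
    rw [Fin.lt_def]
    omega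
  · rw [update_of_ne hc, update_of_ne hd]
    exact hcol c d hcd hlt

theorem IsPick.isUnpairedOpen_update (hcol : ColsStrictlyIncrease T) (hvw : v ≠ w)
    (hx : IsPick T v w x) :
    IsUnpairedOpen (colCount (update T x w) v) (colCount (update T x w) w) x.1.2 := by
  refine hx.2.isUnpairedOpen_of_flip ?_ (fun i hi => colCount_update_of_ne hi w v)
    (fun i hi => colCount_update_of_ne hi w w)
  have hv := colCount_update_add T x w v
  have hw := colCount_update_add T x w w
  simp only [hx.1, ↓reduceIte, if_neg hvw, if_neg hvw.symm] at hv hw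
  have := hx.colCount_eq_one hcol
  omega

theorem IsPick.not_isUnpairedOpen_update (hcol : ColsStrictlyIncrease T) (hx : IsPick T v w x)
    {k : ℕ} (hk : k < x.1.2) :
    ¬ IsUnpairedOpen (colCount (update T x w) v) (colCount (update T x w) w) k :=
  hx.2.1.not_isUnpairedOpen_of_flip (by have := hx.colCount_eq_one hcol; omega)
    (fun i hi => colCount_update_of_ne hi w v) (fun i hi => colCount_update_of_ne hi w w) hk

theorem IsPick.eq_of_update_eq {T₁ T₂ : cellsOf ν → Fin n} {x₁ x₂ : cellsOf ν}
    (hcol₁ : ColsStrictlyIncrease T₁) (hcol₂ : ColsStrictlyIncrease T₂) (hvw : v ≠ w)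
    (h₁ : IsPick T₁ v w x₁) (h₂ : IsPick T₂ v w x₂) (hU : ColsStrictlyIncrease (update T₁ x₁ w))
    (h : update T₁ x₁ w = update T₂ x₂ w) : T₁ = T₂ := by
  -- the changed entry is recovered as the leftmost unpaired `w`
  have hcol : x₁.1.2 = x₂.1.2 := by
    rcases lt_trichotomy x₁.1.2 x₂.1.2 with hlt | heq | hgt
    · exact absurd (h ▸ h₁.isUnpairedOpen_update hcol₁ hvw)
        (h₂.not_isUnpairedOpen_update hcol₂ hlt)
    · exact heq
    · exact absurd (h ▸ h₂.isUnpairedOpen_update hcol₂ hvw)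
        (h₁.not_isUnpairedOpen_update hcol₁ hgt)
  obtain rfl : x₁ = x₂ := hU.eq_of_apply_eq hcol (by rw [update_self, h, update_self])
  calc T₁ = update (update T₁ x₁ w) x₁ v := by rw [update_idem, ← h₁.1, update_eq_self]
    _ = T₂ := by rw [h, update_idem, ← h₂.1, update_eq_self]

end Crystal

section Dominance

variable {n : ℕ} {ν : Nat.Partition n}

theorem kostkaComp_le_of_move {c c' : ℕ → ℕ} {r : ℕ} (hr : r + 1 < n) (hc : c (r + 1) < c r)
    (hmove : c' + Pi.single r 1 = c + Pi.single (r + 1) 1) :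
    kostkaComp ν c ≤ kostkaComp ν c' := by
  let v : Fin n := ⟨r, by omega⟩
  let w : Fin n := ⟨r + 1, hr⟩
  have hvw : (w : ℕ) = v + 1 := rfl
  have hpick (T : Tableau ν c) : ∃ x, IsPick T.1 v w x :=
    exists_isPick (by rw [T.2.2.2 v, T.2.2.2 w]; exact hc)
  choose x hx using hpick
  have hcontent (T : Tableau ν c) (i : Fin n) :
      #{y | Function.update T.1 (x T) w y = i} = c' i := by
    have h1 := card_filter_update_add (mem_univ (x T)) T.1 w i
    have h2 := congrFun hmove i
    have hv : v = i ↔ (i : ℕ) = r := by simp [Fin.ext_iff, v, eq_comm]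
    have hw : w = i ↔ (i : ℕ) = r + 1 := by simp [Fin.ext_iff, w, eq_comm]
    rw [(hx T).1, T.2.2.2 i] at h1
    simp only [Pi.add_apply, Pi.single_apply, hv, hw] at h1 h2
    split_ifs at h1 h2 <;> omega
  let F (T : Tableau ν c) : Tableau ν c' :=
    ⟨Function.update T.1 (x T) w, (hx T).rowsWeaklyIncrease_update T.2.1 T.2.2.1 hvw,
      (hx T).colsStrictlyIncrease_update T.2.2.1 hvw, hcontent T⟩
  exact Nat.card_le_card_of_injective F fun T₁ T₂ h => Subtype.ext <|
    (hx T₁).eq_of_update_eq T₁.2.2.1 T₂.2.2.1 (fun h => by simp [Fin.ext_iff, v, w] at h) (hx T₂)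
      (F T₁).2.2.1 (congrArg Subtype.val h)

theorem exists_descent_of_sum_Ico_le {c μ : ℕ → ℕ} (hμ : Antitone μ) {d n : ℕ} (hdn : d < n)
    (hd : μ d < c d) (hsum : ∑ i ∈ Ico d n, c i ≤ ∑ i ∈ Ico d n, μ i) :
    ∃ t, d ≤ t ∧ t + 1 < n ∧ c (t + 1) < c t ∧
      ∑ i ∈ Ico d (t + 1), μ i < ∑ i ∈ Ico d (t + 1), c i := by
  rw [sum_eq_sum_Ico_succ_bot hdn c, sum_eq_sum_Ico_succ_bot hdn μ] at hsum
  have hdn' : d + 1 < n := by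
    by_contra! h
    simp [Ico_eq_empty_of_le h] at hsum
    omega
  by_cases hdesc : c (d + 1) < c d
  · exact ⟨d, le_rfl, hdn', hdesc, by simpa using hd⟩
  · obtain ⟨t, hdt, htn, htdesc, hwin⟩ :=
      exists_descent_of_sum_Ico_le hμ hdn' ((hμ d.le_succ).trans_lt (hd.trans_le (not_lt.1 hdesc)))
        (by omega)
    refine ⟨t, by omega, htn, htdesc, ?_⟩
    rw [sum_eq_sum_Ico_succ_bot (by omega) c, sum_eq_sum_Ico_succ_bot (by omega) μ]
    omega
termination_by n - d

theorem exists_descent_of_sum_range_le {c μ : ℕ → ℕ} (hμ : Antitone μ) {n : ℕ}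
    (htot : ∑ i ∈ range n, c i = ∑ i ∈ range n, μ i)
    (hdom : ∀ k, ∑ i ∈ range k, μ i ≤ ∑ i ∈ range k, c i) (hne : ∃ i < n, c i ≠ μ i) :
    ∃ t, t + 1 < n ∧ c (t + 1) < c t ∧
      ∑ i ∈ range (t + 1), μ i < ∑ i ∈ range (t + 1), c i := by
  -- at the first index `d` where `c` and `μ` differ, `c` is the larger
  obtain ⟨d, ⟨hdn, hcd⟩, hmin⟩ : ∃ d, (d < n ∧ c d ≠ μ d) ∧ ∀ i < d, c i = μ i :=
    ⟨Nat.find hne, Nat.find_spec hne, fun i hi => by_contra fun h =>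
      Nat.find_min hne hi ⟨hi.trans (Nat.find_spec hne).1, h⟩⟩
  have hpre : ∑ i ∈ range d, c i = ∑ i ∈ range d, μ i :=
    sum_congr rfl fun i hi => hmin i (mem_range.1 hi)
  have hμd : μ d < c d := by
    have := hdom (d + 1)
    rw [sum_range_succ, sum_range_succ] at this
    omega
  have htail : ∑ i ∈ Ico d n, c i ≤ ∑ i ∈ Ico d n, μ i := by
    rw [← sum_range_add_sum_Ico c hdn.le, ← sum_range_add_sum_Ico μ hdn.le] at htot
    omega
  obtain ⟨t, hdt, htn, hdesc, hwin⟩ := exists_descent_of_sum_Ico_le hμ hdn hμd htail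
  refine ⟨t, htn, hdesc, ?_⟩
  rw [← sum_range_add_sum_Ico c (m := d) (by omega),
    ← sum_range_add_sum_Ico μ (m := d) (by omega)]
  omega

theorem sum_range_add_of_move {c c' : ℕ → ℕ} {t : ℕ}
    (hmove : c' + Pi.single t 1 = c + Pi.single (t + 1) 1) (k : ℕ) :
    ∑ i ∈ range k, c' i + (if t < k then 1 else 0) =
      ∑ i ∈ range k, c i + (if t + 1 < k then 1 else 0) := by
  simpa [sum_add_distrib, sum_pi_single'] using congrArg (fun f => ∑ i ∈ range k, f i) hmove

theorem kostkaComp_le_of_sum_range_le (ν : Nat.Partition n) {μ c : ℕ → ℕ} (hμ : Antitone μ)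
    (htot : ∑ i ∈ range n, c i = ∑ i ∈ range n, μ i)
    (hdom : ∀ k, ∑ i ∈ range k, μ i ≤ ∑ i ∈ range k, c i) :
    kostkaComp ν c ≤ kostkaComp ν μ := by
  induction hm : ∑ k ∈ range n, ∑ i ∈ range k, c i using Nat.strong_induction_on
    generalizing c with
  | _ m ih =>
  by_cases hcμ : ∀ i < n, c i = μ i
  · exact (kostkaComp_congr hcμ).le
  push Not at hcμ
  obtain ⟨t, htn, hdesc, hstrict⟩ := exists_descent_of_sum_range_le hμ htot hdom hcμ
  let c' := c + Pi.single (t + 1) 1 - Pi.single t 1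
  have hmove : c' + Pi.single t 1 = c + Pi.single (t + 1) 1 := by
    funext i
    simp only [c', Pi.add_apply, Pi.sub_apply, Pi.single_apply]
    split_ifs <;> subst_vars <;> omega
  have hpre := sum_range_add_of_move hmove
  refine (kostkaComp_le_of_move htn hdesc hmove).trans (ih _ ?_ ?_ ?_ rfl)
  · rw [← hm]
    refine sum_lt_sum (fun k _ => ?_) ⟨t + 1, mem_range.2 htn, ?_⟩
    · have := hpre k
      split_ifs at this <;> omega
    · have := hpre (t + 1)
      simp only [lt_add_one, lt_irrefl, if_true, if_false] at this
      omega
  · have := hpre n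
    simp only [htn, (by omega : t < n), if_true] at this
    omega
  · intro k
    have hk := hpre k
    rcases eq_or_ne k (t + 1) with rfl | hne
    · simp only [lt_add_one, lt_irrefl, if_true, if_false] at hk
      omega
    · have := hdom k
      split_ifs at hk <;> omega

end Dominance

/-- Monotonicity of Kostka numbers in the dominance order: if `μ ⊴ l` then
`K_{νμ} ≥ K_{νl}` for every partition `ν` of `n`. -/
theorem kostka_antitone_dominance (n : ℕ) (l μ ν : Nat.Partition n)
    (h : Dominates l μ) : kostka ν l ≤ kostka ν μ :=
  kostkaComp_le_of_sum_range_le ν (partSeq_antitone μ)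
    (by rw [sum_range_partSeq, sum_range_partSeq]) h
end

section
/- Let a = (a_1,...,a_m) and b = (b_1,...,b_n) be sequences of positive integers with ∑ a_i = ∑ b_j = N, and let a', b' be sequences with the same sums such that a' ⊴ a and b' ⊴ b in dominance order. Then the number of contingency tables satisfies T(a,b) ≤ T(a',b'). -/
/-- The number `T(a,b)` of contingency tables with margins `(a,b)`: `m × n` matrices
of nonnegative integers with `i`-th row sum `a i` and `j`-th column sum `b j`. -/
noncomputable def ctCount (m n : ℕ) (a : Fin m → ℕ) (b : Fin n → ℕ) : ℕ :=
  Nat.card {M : Fin m → Fin n → ℕ //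
    (∀ i, ∑ j, M i j = a i) ∧ (∀ j, ∑ i, M i j = b j)}

/-!
Transposition swaps the roles of `a` and `b`, so it suffices to replace `a` by `a'`. Since `a'` is
decreasing and `a' ⊴ a`, one reaches `a'` from `a` by Robin Hood transfers, moving one unit from a
row `i` to a later row `k` with `a k < a i`: take a row `i` at which the partial sums of `a` start
to exceed those of `a'`, and the first row `k` after which they agree again. This keeps `a' ⊴ a`
and lowers the sum of the partial sums of `a`.

A transfer does not decrease `T`: once all other rows are fixed, the remaining two-row tables with
column sums `c` are determined by their first row, a vector `x ≤ c` with `∑ x = a i`. The number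
of such vectors is symmetric about `(∑ c) / 2` and unimodal in `∑ x` (by induction on the number
of columns), so it does not drop when `a i` moves one step towards `a k`.
-/

open Finset

lemma apply_le_apply_of_symm_of_le_succ {α : Type*} [Preorder α] {f : ℕ → α} {S : ℕ}
    (hsymm : ∀ r ≤ S, f (S - r) = f r) (hstep : ∀ r, 2 * r < S → f r ≤ f (r + 1)) {u w : ℕ}
    (huw : u ≤ w) (hsum : u + w ≤ S) :
    f u ≤ f w := by
  have hmono : ∀ v, u ≤ v → 2 * v ≤ S → f u ≤ f v := by
    intro v huv hv
    induction v, huv using Nat.le_induction with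
    | base => exact le_rfl
    | succ v _ ih => exact (ih (by omega)).trans (hstep v (by omega))
  rcases le_total (2 * w) S with h | h
  · exact hmono w huw h
  · rw [← hsymm w (by omega)]
    exact hmono (S - w) (by omega) (by omega)

section BoundedCompositions

variable {κ κ' : Type*} [Fintype κ] [DecidableEq κ] [Fintype κ'] [DecidableEq κ']

def boundedCompositions (c : κ → ℕ) (r : ℕ) : Finset (κ → ℕ) :=
  {x ∈ Fintype.piFinset fun j => range (c j + 1) | ∑ j, x j = r}

@[simp] lemma mem_boundedCompositions {c : κ → ℕ} {r : ℕ} {x : κ → ℕ} :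
    x ∈ boundedCompositions c r ↔ x ≤ c ∧ ∑ j, x j = r := by
  simp [boundedCompositions, Pi.le_def]

lemma sub_mem_boundedCompositions {c : κ → ℕ} {r : ℕ} {x : κ → ℕ}
    (hx : x ∈ boundedCompositions c r) : c - x ∈ boundedCompositions c (∑ j, c j - r) := by
  rw [mem_boundedCompositions] at hx ⊢
  refine ⟨tsub_le_self, ?_⟩
  simp only [Pi.sub_apply]
  rw [sum_tsub_distrib _ fun j _ => hx.1 j, hx.2]

lemma card_boundedCompositions_sum_sub (c : κ → ℕ) {r : ℕ} (hr : r ≤ ∑ j, c j) :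
    #(boundedCompositions c (∑ j, c j - r)) = #(boundedCompositions c r) := by
  refine card_nbij' (c - ·) (c - ·) (fun x hx => ?_) (fun x hx => ?_) (fun x hx => ?_)
    (fun x hx => ?_)
  · simpa [Nat.sub_sub_self hr] using sub_mem_boundedCompositions hx
  · exact sub_mem_boundedCompositions hx
  · exact tsub_tsub_cancel_of_le (mem_boundedCompositions.1 hx).1
  · exact tsub_tsub_cancel_of_le (mem_boundedCompositions.1 hx).1

lemma card_boundedCompositions_comp_equiv (e : κ' ≃ κ) (c : κ → ℕ) (r : ℕ) :
    #(boundedCompositions (c ∘ e) r) = #(boundedCompositions c r) := by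
  refine card_nbij' (· ∘ e.symm) (· ∘ e) (fun x hx => ?_) (fun x hx => ?_)
    (fun x _ => by simp [Function.comp_assoc]) (fun x _ => by simp [Function.comp_assoc])
  all_goals
    obtain ⟨hle, hsum⟩ := mem_boundedCompositions.1 hx
    refine mem_boundedCompositions.2 ⟨fun j => ?_, ?_⟩
  · simpa using hle (e.symm j)
  · rw [← hsum]; exact e.symm.sum_comp x
  · exact hle (e j)
  · rw [← hsum]; exact e.sum_comp x

lemma card_boundedCompositions_succ {n : ℕ} (c : Fin (n + 1) → ℕ) (r : ℕ) :
    #(boundedCompositions c r) =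
      ∑ v ∈ Ico (r - c 0) (r + 1), #(boundedCompositions (Fin.tail c) v) := by
  refine card_eq_sum_card_fiberwise (f := fun x => ∑ j, Fin.tail x j) (fun x hx => ?_) |>.trans
    (sum_congr rfl fun v hv => card_nbij' Fin.tail (Fin.cons (α := fun _ => ℕ) (r - v)) ?_ ?_ ?_ ?_)
  · simp only [mem_coe, mem_boundedCompositions, Pi.le_def, Fin.sum_univ_succ, mem_Ico,
      Fin.tail] at hx ⊢
    have := hx.1 0
    omega
  · intro x hx
    rw [mem_coe, mem_filter, mem_boundedCompositions] at hx
    exact mem_boundedCompositions.2 ⟨fun j => hx.1.1 j.succ, hx.2⟩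
  · intro y hy
    rw [mem_coe, mem_boundedCompositions] at hy
    rw [mem_Ico] at hv
    rw [mem_coe, mem_filter, mem_boundedCompositions, Fin.cons_le, Fin.sum_univ_succ]
    simp only [Fin.cons_zero, Fin.cons_succ, Fin.tail_cons]
    exact ⟨⟨⟨by omega, hy.1⟩, by omega⟩, hy.2⟩
  · intro x hx
    rw [mem_coe, mem_filter, mem_boundedCompositions, Fin.sum_univ_succ] at hx
    rw [← hx.2, ← hx.1.2]
    simp only [Fin.tail, add_tsub_cancel_right]
    exact Fin.cons_self_tail x
  · intro y _
    exact Fin.tail_cons _ _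

lemma card_boundedCompositions_le_succ {n : ℕ} (c : Fin n → ℕ) {r : ℕ}
    (hr : 2 * r < ∑ j, c j) :
    #(boundedCompositions c r) ≤ #(boundedCompositions c (r + 1)) := by
  induction n generalizing r with
  | zero => simp at hr
  | succ n ih =>
    rw [Fin.sum_univ_succ] at hr
    rw [card_boundedCompositions_succ, card_boundedCompositions_succ,
      sum_Ico_succ_top (by omega : r + 1 - c 0 ≤ r + 1)]
    rcases le_or_gt (c 0) r with h | h
    · rw [sum_eq_sum_Ico_succ_bot (by omega : r - c 0 < r + 1),
        show r - c 0 + 1 = r + 1 - c 0 by omega, add_comm]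
      refine Nat.add_le_add_left ?_ _
      exact apply_le_apply_of_symm_of_le_succ (f := fun v => #(boundedCompositions (Fin.tail c) v))
        (fun v hv => card_boundedCompositions_sum_sub (Fin.tail c) hv) (fun v hv => ih _ hv)
        (by omega) (by simp only [Fin.tail]; omega)
    · rw [show r + 1 - c 0 = r - c 0 by omega]
      exact Nat.le_add_right _ _

lemma card_boundedCompositions_le_of_le_of_add_le {c : κ → ℕ} {u w : ℕ} (huw : u ≤ w)
    (hsum : u + w ≤ ∑ j, c j) :
    #(boundedCompositions c u) ≤ #(boundedCompositions c w) := by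
  let e := (Fintype.equivFin κ).symm
  rw [← card_boundedCompositions_comp_equiv e, ← card_boundedCompositions_comp_equiv e]
  rw [← e.sum_comp] at hsum
  exact apply_le_apply_of_symm_of_le_succ (f := fun v => #(boundedCompositions (c ∘ e) v))
    (fun r hr => card_boundedCompositions_sum_sub (c ∘ e) hr)
    (fun r hr => card_boundedCompositions_le_succ (c ∘ e) hr) huw hsum

end BoundedCompositions

section Tables

variable {ι ι' κ : Type*} [Fintype ι] [Fintype ι'] [Fintype κ]

abbrev Table (a : ι → ℕ) (b : κ → ℕ) : Type _ :=
  {M : ι → κ → ℕ // (∀ i, ∑ j, M i j = a i) ∧ ∀ j, ∑ i, M i j = b j}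

abbrev SubTable (a : ι → ℕ) (b : κ → ℕ) : Type _ :=
  {M : ι → κ → ℕ // (∀ i, ∑ j, M i j = a i) ∧ ∀ j, ∑ i, M i j ≤ b j}

lemma finite_of_forall_sum_eq (a : ι → ℕ) (p : (ι → κ → ℕ) → Prop) :
    Finite {M : ι → κ → ℕ // (∀ i, ∑ j, M i j = a i) ∧ p M} :=
  Finite.of_injective
    (fun M i j => (⟨M.1 i j, Nat.lt_succ_of_le <| (M.2.1 i).le.trans' <|
      single_le_sum (fun _ _ => Nat.zero_le _) (mem_univ j)⟩ : Fin (a i + 1)))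
    fun _ _ h => Subtype.ext <| funext₂ fun i j => congrArg Fin.val (congrFun₂ h i j)

instance (a : ι → ℕ) (b : κ → ℕ) : Finite (Table a b) := finite_of_forall_sum_eq a _

instance (a : ι → ℕ) (b : κ → ℕ) : Finite (SubTable a b) := finite_of_forall_sum_eq a _

lemma Table.sum_eq_sum {a : ι → ℕ} {b : κ → ℕ} (M : Table a b) : ∑ i, a i = ∑ j, b j := by
  simp only [← M.2.1, ← M.2.2]
  exact sum_comm

def Table.transposeEquiv (a : ι → ℕ) (b : κ → ℕ) : Table a b ≃ Table b a where
  toFun M := ⟨fun j i => M.1 i j, M.2.2, M.2.1⟩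
  invFun M := ⟨fun i j => M.1 j i, M.2.2, M.2.1⟩
  left_inv _ := rfl
  right_inv _ := rfl

def Table.compEquiv (e : ι' ≃ ι) (a : ι → ℕ) (b : κ → ℕ) : Table (a ∘ e) b ≃ Table a b where
  toFun M := ⟨fun i => M.1 (e.symm i), fun i => by simpa using M.2.1 (e.symm i),
    fun j => by rw [← M.2.2 j]; exact e.symm.sum_comp (M.1 · j)⟩
  invFun M := ⟨fun i => M.1 (e i), fun i => M.2.1 (e i),
    fun j => by rw [← M.2.2 j]; exact e.sum_comp (M.1 · j)⟩
  left_inv M := by ext; simp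
  right_inv M := by ext; simp

def Table.sumElimEquiv (a₁ : ι → ℕ) (a₂ : ι' → ℕ) (b : κ → ℕ) :
    Table (Sum.elim a₁ a₂) b ≃ Σ L : SubTable a₂ b, Table a₁ (b - fun j => ∑ l, L.1 l j) where
  toFun M :=
    have hcol (j : κ) := (Fintype.sum_sum_type _).symm.trans (M.2.2 j)
    ⟨⟨fun l => M.1 (.inr l), fun l => M.2.1 (.inr l), fun j => by
        have := hcol j; dsimp only; omega⟩,
      ⟨fun i => M.1 (.inl i), fun i => M.2.1 (.inl i), fun j => by
        have := hcol j; simp only [Pi.sub_apply]; omega⟩⟩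
  invFun L := ⟨Sum.elim L.2.1 L.1.1, by rintro (i | l) <;> simp [L.2.2.1, L.1.2.1], fun j => by
    have := L.2.2.2 j; have := L.1.2.2 j
    simp only [Pi.sub_apply] at *
    rw [Fintype.sum_sum_type]; simp only [Sum.elim_inl, Sum.elim_inr]; omega⟩
  left_inv M := Subtype.ext (Sum.elim_comp_inl_inr M.1)
  right_inv _ := rfl

lemma card_table_sumElim_le {a₁ a₁' : ι → ℕ} (a₂ : ι' → ℕ) (b : κ → ℕ)
    (h : ∀ c : κ → ℕ, Nat.card (Table a₁ c) ≤ Nat.card (Table a₁' c)) :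
    Nat.card (Table (Sum.elim a₁ a₂) b) ≤ Nat.card (Table (Sum.elim a₁' a₂) b) := by
  have := Fintype.ofFinite (SubTable a₂ b)
  rw [Nat.card_congr (Table.sumElimEquiv a₁ a₂ b), Nat.card_congr (Table.sumElimEquiv a₁' a₂ b),
    Nat.card_sigma, Nat.card_sigma]
  exact sum_le_sum fun L _ => h _

lemma card_table_le_of_restrict_le (P : ι → Prop) [DecidablePred P] {a a' : ι → ℕ} (b : κ → ℕ)
    (hout : ∀ i, ¬P i → a' i = a i)
    (h : ∀ c : κ → ℕ, Nat.card (Table (fun i : {i // P i} => a i) c) ≤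
      Nat.card (Table (fun i : {i // P i} => a' i) c)) :
    Nat.card (Table a b) ≤ Nat.card (Table a' b) := by
  have hsplit (a : ι → ℕ) : a ∘ Equiv.sumCompl P =
      Sum.elim (fun i : {i // P i} => a i) (fun i : {i // ¬P i} => a i) := by
    ext (i | i) <;> rfl
  have hout' : (fun i : {i // ¬P i} => a' i) = fun i : {i // ¬P i} => a i :=
    funext fun i => hout i i.2
  rw [← Nat.card_congr (Table.compEquiv (Equiv.sumCompl P) a b),
    ← Nat.card_congr (Table.compEquiv (Equiv.sumCompl P) a' b), hsplit, hsplit, hout']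
  exact card_table_sumElim_le _ b h

end Tables

section Transfer

variable {ι κ : Type*} [Fintype ι] [DecidableEq ι] [Fintype κ] [DecidableEq κ]

lemma card_table_of_forall_eq_or_eq {a : ι → ℕ} (c : κ → ℕ) {i k : ι} (hik : i ≠ k)
    (hcover : ∀ l, l = i ∨ l = k) :
    Nat.card (Table a c) =
      if a i + a k = ∑ j, c j then #(boundedCompositions c (a i)) else 0 := by
  have hsum (f : ι → ℕ) : ∑ l, f l = f i + f k :=
    Fintype.sum_eq_add i k hik fun l hl => ((hcover l).elim hl.1 hl.2).elim
  have hcol {M : ι → κ → ℕ} (hM : ∀ j, ∑ l, M l j = c j) (j : κ) : M i j + M k j = c j :=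
    hsum (M · j) ▸ hM j
  split_ifs with htot
  · rw [← Nat.card_eq_finsetCard]
    refine Nat.card_congr
      { toFun := fun M => ⟨M.1 i, mem_boundedCompositions.2
          ⟨fun j => (Nat.le_add_right _ _).trans (hcol M.2.2 j).le, M.2.1 i⟩⟩
        invFun := fun x => ⟨fun l => if l = i then x.1 else c - x.1, ?_, fun j => ?_⟩
        left_inv := fun M => ?_
        right_inv := fun x => Subtype.ext (if_pos rfl) }
    · obtain ⟨-, hxs⟩ := mem_boundedCompositions.1 x.2
      obtain ⟨-, hcx⟩ := mem_boundedCompositions.1 (sub_mem_boundedCompositions x.2)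
      intro l
      rcases hcover l with rfl | rfl
      · simpa using hxs
      · simp only [if_neg hik.symm, hcx]
        omega
    · rw [hsum]
      simp only [↓reduceIte, if_neg hik.symm, Pi.sub_apply]
      have : x.1 j ≤ c j := (mem_boundedCompositions.1 x.2).1 j
      omega
    · ext l j
      have := hcol M.2.2 j
      rcases hcover l with rfl | rfl
      · simp
      · simp only [if_neg hik.symm, Pi.sub_apply]
        omega
  · have : IsEmpty (Table a c) := ⟨fun M => htot (hsum a ▸ M.sum_eq_sum)⟩
    exact Nat.card_of_isEmpty

theorem card_table_le_of_transfer {a a' : ι → ℕ} (b : κ → ℕ) {i k : ι} (hik : i ≠ k)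
    (hlt : a k < a i) (htransfer : a' + Pi.single i 1 = a + Pi.single k 1) :
    Nat.card (Table a b) ≤ Nat.card (Table a' b) := by
  have hi : a' i + 1 = a i := by simpa [hik] using congrFun htransfer i
  have hk : a' k = a k + 1 := by simpa [hik.symm] using congrFun htransfer k
  have hout (l : ι) (hl : ¬(l = i ∨ l = k)) : a' l = a l := by
    simpa [not_or.1 hl] using congrFun htransfer l
  refine card_table_le_of_restrict_le (fun l => l = i ∨ l = k) b hout fun c => ?_
  have hik' : (⟨i, .inl rfl⟩ : {l // l = i ∨ l = k}) ≠ ⟨k, .inr rfl⟩ := by simpa using hik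
  have hcover (l : {l // l = i ∨ l = k}) : l = ⟨i, .inl rfl⟩ ∨ l = ⟨k, .inr rfl⟩ := by
    obtain ⟨l, rfl | rfl⟩ := l <;> simp
  rw [card_table_of_forall_eq_or_eq c hik' hcover, card_table_of_forall_eq_or_eq c hik' hcover]
  dsimp only
  split_ifs with htot htot'
  · rw [← card_boundedCompositions_sum_sub c (htot ▸ Nat.le_add_right _ _)]
    exact card_boundedCompositions_le_of_le_of_add_le (by omega) (by omega)
  · omega
  all_goals exact Nat.zero_le _

end Transfer

lemma exists_maximal_pos_run {D : ℕ → ℕ} {m s : ℕ} (h0 : D 0 = 0) (hm : D m = 0)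
    (hs : 0 < D s) (hsm : s ≤ m) :
    ∃ i k, i < k ∧ k < m ∧ D i = 0 ∧ D (k + 1) = 0 ∧ ∀ t, i < t → t ≤ k → 0 < D t := by
  classical
  have hs0 : s ≠ 0 := by rintro rfl; omega
  have hex : ∃ t, 0 < D (t + 1) := ⟨s - 1, by rwa [Nat.sub_add_cancel (by omega)]⟩
  have hi := Nat.find_spec hex
  have his : Nat.find hex ≤ s - 1 := Nat.find_min' hex (by rwa [Nat.sub_add_cancel (by omega)])
  have him : Nat.find hex + 1 ≠ m := by rintro h; rw [h] at hi; omega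
  have hi0 : D (Nat.find hex) = 0 := by
    rcases Nat.eq_zero_or_pos (Nat.find hex) with h | h
    · rwa [h]
    · have := Nat.find_min hex (Nat.sub_one_lt_of_lt h)
      rwa [Nat.sub_add_cancel h, not_lt, Nat.le_zero] at this
  have hex' : ∃ t, Nat.find hex < t ∧ D (t + 1) = 0 :=
    ⟨m - 1, by omega, by rwa [Nat.sub_add_cancel (by omega)]⟩
  obtain ⟨hik, hk⟩ := Nat.find_spec hex'
  have hkm : Nat.find hex' ≤ m - 1 :=
    Nat.find_min' hex' ⟨by omega, by rwa [Nat.sub_add_cancel (by omega)]⟩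
  refine ⟨_, _, hik, by omega, hi0, hk, fun t hit htk => ?_⟩
  rcases (show t = Nat.find hex + 1 ∨ Nat.find hex + 1 < t by omega) with rfl | h
  · exact hi
  · have := Nat.find_min hex' (show t - 1 < Nat.find hex' by omega)
    rw [not_and, Nat.sub_add_cancel (by omega)] at this
    exact Nat.pos_of_ne_zero (this (by omega))

section Dominance

variable {m : ℕ}

def prefixSum (a : Fin m → ℕ) (t : ℕ) : ℕ :=
  ∑ j ∈ univ.filter (fun j : Fin m => (j : ℕ) < t), a j

lemma prefixSum_zero (a : Fin m → ℕ) : prefixSum a 0 = 0 := by simp [prefixSum]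

lemma prefixSum_succ (a : Fin m → ℕ) {t : ℕ} (ht : t < m) :
    prefixSum a (t + 1) = prefixSum a t + a ⟨t, ht⟩ := by
  have : univ.filter (fun j : Fin m => (j : ℕ) < t + 1) =
      insert ⟨t, ht⟩ (univ.filter fun j : Fin m => (j : ℕ) < t) := by
    ext j
    simp only [mem_filter, mem_univ, true_and, mem_insert, Fin.ext_iff]
    omega
  rw [prefixSum, this, sum_insert (by simp), add_comm]
  rfl

lemma prefixSum_of_le (a : Fin m → ℕ) {t : ℕ} (ht : m ≤ t) : prefixSum a t = ∑ j, a j := by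
  rw [prefixSum, filter_true_of_mem fun j _ => j.2.trans_le ht]

lemma prefixSum_add (a b : Fin m → ℕ) (t : ℕ) :
    prefixSum (a + b) t = prefixSum a t + prefixSum b t :=
  sum_add_distrib

lemma prefixSum_single (i : Fin m) (t : ℕ) :
    prefixSum (Pi.single i 1) t = if (i : ℕ) < t then 1 else 0 := by
  simp [prefixSum, sum_pi_single']

lemma eq_of_forall_prefixSum_eq {a a' : Fin m → ℕ}
    (h : ∀ t ≤ m, prefixSum a t = prefixSum a' t) : a = a' := by
  ext ⟨l, hl⟩
  have h1 := h (l + 1) hl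
  rw [prefixSum_succ a hl, prefixSum_succ a' hl, h l hl.le] at h1
  omega

lemma exists_transfer_of_dominates {a a' : Fin m → ℕ} (ha' : Antitone a')
    (hsum : ∑ i, a i = ∑ i, a' i) (hdom : ∀ t, prefixSum a' t ≤ prefixSum a t) (hne : a ≠ a') :
    ∃ i k : Fin m, i < k ∧ a k < a i ∧
      ∀ t, (i : ℕ) < t → t ≤ k → prefixSum a' t < prefixSum a t := by
  obtain ⟨s, hsm, hs⟩ : ∃ s ≤ m, prefixSum a s ≠ prefixSum a' s := by
    by_contra! h
    exact hne (eq_of_forall_prefixSum_eq h)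
  obtain ⟨i, k, hik, hkm, hi, hk, hrun⟩ :=
    exists_maximal_pos_run (D := fun t => prefixSum a t - prefixSum a' t)
      (by simp [prefixSum_zero]) (by simp [prefixSum_of_le, hsum]) (by have := hdom s; omega) hsm
  refine ⟨⟨i, by omega⟩, ⟨k, hkm⟩, hik, ?_, fun t hit htk => by have := hrun t hit htk; omega⟩
  have hanti := ha' (show (⟨i, by omega⟩ : Fin m) ≤ ⟨k, hkm⟩ from hik.le)
  have := hrun k hik le_rfl
  have := hrun (i + 1) (by omega) (by omega)
  have := hdom i
  have := hdom (k + 1)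
  simp only [prefixSum_succ a hkm, prefixSum_succ a' hkm, prefixSum_succ a (hik.trans hkm),
    prefixSum_succ a' (hik.trans hkm)] at *
  omega

variable {κ : Type*} [Fintype κ] [DecidableEq κ]

theorem card_table_le_of_dominates {a a' : Fin m → ℕ} (b : κ → ℕ) (ha' : Antitone a')
    (hsum : ∑ i, a i = ∑ i, a' i) (hdom : ∀ t, prefixSum a' t ≤ prefixSum a t) :
    Nat.card (Table a b) ≤ Nat.card (Table a' b) := by
  induction hΦ : ∑ t ∈ range m, prefixSum a t using Nat.strong_induction_on generalizing a with
  | _ Φ ih =>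
  rcases eq_or_ne a a' with rfl | hne
  · exact le_rfl
  obtain ⟨i, k, hik, hlt, hrun⟩ := exists_transfer_of_dominates ha' hsum hdom hne
  have hik' : (i : ℕ) < k := hik
  set a'' := a + Pi.single k 1 - Pi.single i 1
  have htransfer : a'' + Pi.single i 1 = a + Pi.single k 1 := by
    refine tsub_add_cancel_of_le fun l => ?_
    rcases eq_or_ne l i with rfl | hl
    · simp only [Pi.single_eq_same, Pi.add_apply]
      omega
    · simp [hl]
  have hpre (t : ℕ) : prefixSum a'' t + (if (i : ℕ) < t then 1 else 0) =
      prefixSum a t + (if (k : ℕ) < t then 1 else 0) := by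
    simpa only [prefixSum_add, prefixSum_single] using congrArg (prefixSum · t) htransfer
  refine (card_table_le_of_transfer b hik.ne hlt htransfer).trans (ih _ ?_ ?_ ?_ rfl)
  · rw [← hΦ]
    refine sum_lt_sum (fun t _ => by have := hpre t; split_ifs at this <;> omega)
      ⟨k, mem_range.2 k.2, by have := hpre k; split_ifs at this <;> omega⟩
  · have := hpre m
    rw [prefixSum_of_le _ le_rfl, prefixSum_of_le _ le_rfl, if_pos i.2, if_pos k.2] at this
    omega
  · intro t
    have := hpre t
    have := hdom t
    by_cases h : (i : ℕ) < t ∧ t ≤ k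
    · have := hrun t h.1 h.2
      split_ifs at * <;> omega
    · split_ifs at * <;> omega

end Dominance

theorem contingency_majorization_general (m n N : ℕ)
    (a a' : Fin m → ℕ) (b b' : Fin n → ℕ)
    (ha'mono : Antitone a')
    (hb'mono : Antitone b')
    (hsa : ∑ i, a i = N) (hsa' : ∑ i, a' i = N)
    (hsb : ∑ j, b j = N) (hsb' : ∑ j, b' j = N)
    (hda : ∀ i : ℕ, ∑ j ∈ Finset.univ.filter (fun j : Fin m => (j : ℕ) < i), a' j ≤
        ∑ j ∈ Finset.univ.filter (fun j : Fin m => (j : ℕ) < i), a j)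
    (hdb : ∀ i : ℕ, ∑ j ∈ Finset.univ.filter (fun j : Fin n => (j : ℕ) < i), b' j ≤
        ∑ j ∈ Finset.univ.filter (fun j : Fin n => (j : ℕ) < i), b j) :
    ctCount m n a b ≤ ctCount m n a' b' :=
  calc ctCount m n a b
    _ ≤ ctCount m n a' b := card_table_le_of_dominates b ha'mono (hsa.trans hsa'.symm) hda
    _ = ctCount n m b a' := Nat.card_congr (Table.transposeEquiv a' b)
    _ ≤ ctCount n m b' a' := card_table_le_of_dominates a' hb'mono (hsb.trans hsb'.symm) hdb
    _ = ctCount m n a' b' := Nat.card_congr (Table.transposeEquiv b' a')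

/-- Majorization property of contingency tables: if `a' ⊴ a` and `b' ⊴ b` in the
dominance order (all margins positive, decreasing, with equal total sums `N`), then
`T(a,b) ≤ T(a',b')`. -/
theorem contingency_majorization (m n N : ℕ)
    (a a' : Fin m → ℕ) (b b' : Fin n → ℕ)
    (hapos : ∀ i, 0 < a i) (ha'pos : ∀ i, 0 < a' i)
    (hbpos : ∀ j, 0 < b j) (hb'pos : ∀ j, 0 < b' j)
    (hamono : Antitone a) (ha'mono : Antitone a')
    (hbmono : Antitone b) (hb'mono : Antitone b')
    (hsa : ∑ i, a i = N) (hsa' : ∑ i, a' i = N)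
    (hsb : ∑ j, b j = N) (hsb' : ∑ j, b' j = N)
    (hda : ∀ i : ℕ, ∑ j ∈ Finset.univ.filter (fun j : Fin m => (j : ℕ) < i), a' j ≤
        ∑ j ∈ Finset.univ.filter (fun j : Fin m => (j : ℕ) < i), a j)
    (hdb : ∀ i : ℕ, ∑ j ∈ Finset.univ.filter (fun j : Fin n => (j : ℕ) < i), b' j ≤
        ∑ j ∈ Finset.univ.filter (fun j : Fin n => (j : ℕ) < i), b j) :
    ctCount m n a b ≤ ctCount m n a' b' :=
  contingency_majorization_general m n N a a' b b' ha'mono hb'mono hsa hsa' hsb hsb' hda hdb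
end

section
/- For every n ≥ 1, E_n · F_n ≥ n!, where E_n is the number of alternating permutations in S_n and F_n is the n-th Fibonacci number. -/
/-! Let `t.perm` swap the two cells of each domino of a tiling `t` of the strip `Fin n` by squares
and dominoes. By induction on `n`, every permutation `σ` becomes down-up after precomposing with
`t.perm` for a suitable `t`. Tilings of `Fin n` are counted by `fib (n + 1)`, so
`(σ, t) ↦ σ ∘ t.perm⁻¹` maps the pairs of a down-up permutation and a tiling onto `S_n`. -/

/-- The Euler number `E_n`: the number of alternating permutations `σ` of `{0,…,n-1}`,
i.e. `σ 0 > σ 1 < σ 2 > σ 3 < ⋯`. -/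
noncomputable def alternatingCount (n : ℕ) : ℕ :=
  Nat.card {σ : Equiv.Perm (Fin n) //
    ∀ i : ℕ, ∀ h : i + 1 < n,
      (Even i → σ ⟨i + 1, h⟩ < σ ⟨i, Nat.lt_of_succ_lt h⟩) ∧
      (¬Even i → σ ⟨i, Nat.lt_of_succ_lt h⟩ < σ ⟨i + 1, h⟩)}

open Function OrderDual Equiv.Perm

section IsDownUp

variable {α : Type*} {n : ℕ}

def IsDownUp [LT α] (f : Fin n → α) : Prop :=
  ∀ i : ℕ, ∀ h : i + 1 < n,
    (Even i → f ⟨i + 1, h⟩ < f ⟨i, Nat.lt_of_succ_lt h⟩) ∧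
    (¬Even i → f ⟨i, Nat.lt_of_succ_lt h⟩ < f ⟨i + 1, h⟩)

theorem isDownUp_of_le_one [LT α] (f : Fin n → α) (hn : n ≤ 1) : IsDownUp f :=
  fun _ h => absurd h (by omega)

-- Up-down sequences are handled as down-up sequences in the order dual.
theorem isDownUp_cons [LT α] {a : α} {g : Fin (n + 1) → α} :
    IsDownUp (Fin.cons a g : Fin (n + 2) → α) ↔ g 0 < a ∧ IsDownUp (toDual ∘ g) := by
  refine ⟨fun h => ⟨?_, fun i hi => ?_⟩, fun ⟨h0, h⟩ i hi => ?_⟩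
  · exact (h 0 (by omega)).1 Even.zero
  · have := h (i + 1) (by omega)
    rw [Nat.even_add_one] at this
    exact ⟨this.2 ∘ not_not.2, this.1⟩
  · cases i with
    | zero => exact ⟨fun _ => h0, fun hne => absurd Even.zero hne⟩
    | succ i =>
      have := h i (by omega)
      rw [Nat.even_add_one]
      exact ⟨this.2, this.1 ∘ not_not.1⟩

theorem isDownUp_toDual_cons [LT α] {a : α} {g : Fin (n + 1) → α} :
    IsDownUp (toDual ∘ Fin.cons a g : Fin (n + 2) → αᵒᵈ) ↔ a < g 0 ∧ IsDownUp g := by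
  rw [Fin.comp_cons, isDownUp_cons]
  rfl

theorem IsDownUp.cons_of_le [Preorder α] {a b : α} {g : Fin n → α}
    (h : IsDownUp (Fin.cons a g : Fin (n + 1) → α)) (hab : a ≤ b) :
    IsDownUp (Fin.cons b g : Fin (n + 1) → α)
  | 0, hi => ⟨fun he => ((h 0 hi).1 he).trans_le hab, fun hne => absurd Even.zero hne⟩
  | i + 1, hi => h (i + 1) hi

end IsDownUp

inductive StripTiling : ℕ → Type
  | nil : StripTiling 0
  | square {n : ℕ} : StripTiling n → StripTiling (n + 1)
  | domino {n : ℕ} : StripTiling n → StripTiling (n + 2)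

namespace StripTiling

def perm : {n : ℕ} → StripTiling n → Equiv.Perm (Fin n)
  | _, nil => 1
  | _, square t => decomposeFin.symm (0, t.perm)
  | _, domino t => decomposeFin.symm (1, decomposeFin.symm (0, t.perm))

variable {α : Type*} {n : ℕ}

theorem comp_perm_square (t : StripTiling n) (f : Fin (n + 1) → α) :
    f ∘ (square t).perm = Fin.cons (f 0) (Fin.tail f ∘ t.perm) := by
  funext i
  refine Fin.cases ?_ (fun i => ?_) i <;> simp [perm, decomposeFin_symm_apply_succ, Fin.tail]

theorem comp_perm_domino (t : StripTiling n) (f : Fin (n + 2) → α) :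
    f ∘ (domino t).perm = Fin.cons (f 1) (Fin.cons (f 0) (Fin.tail (Fin.tail f) ∘ t.perm)) := by
  funext i
  refine Fin.cases ?_ (fun i => Fin.cases ?_ (fun i => ?_) i) i
  · simp [perm]
  · simp [perm, decomposeFin_symm_apply_one]
  · simp [perm, decomposeFin_symm_apply_succ, Equiv.swap_apply_of_ne_of_ne, Fin.succ_succ_ne_one,
      Fin.tail]

theorem le_comp_perm_zero [Preorder α] (t : StripTiling (n + 1)) (f : Fin (n + 1) → α)
    (h : IsDownUp (f ∘ t.perm)) : f 0 ≤ f (t.perm 0) := by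
  cases t with
  | square t => simp [perm]
  | domino t =>
    rw [comp_perm_domino, isDownUp_cons] at h
    simpa [perm, decomposeFin_symm_apply_zero] using h.1.le

def equivSum : StripTiling (n + 2) ≃ StripTiling (n + 1) ⊕ StripTiling n where
  toFun
    | square t => .inl t
    | domino t => .inr t
  invFun := Sum.elim square domino
  left_inv t := by cases t <;> rfl
  right_inv t := by cases t <;> rfl

instance : Unique (StripTiling 0) where
  default := nil
  uniq t := by cases t; rfl

instance : Unique (StripTiling 1) where
  default := square nil
  uniq t := by
    cases t with
    | square t => cases t; rfl

instance finite : ∀ n, Finite (StripTiling n)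
  | 0 | 1 => Finite.of_subsingleton
  | n + 2 =>
    have := finite n
    have := finite (n + 1)
    Finite.of_equiv _ equivSum.symm

theorem card : ∀ n, Nat.card (StripTiling n) = Nat.fib (n + 1)
  | 0 | 1 => Nat.card_unique
  | n + 2 => by
    rw [Nat.card_congr equivSum, Nat.card_sum, card n, card (n + 1), add_comm]
    exact (Nat.fib_add_two (n := n + 1)).symm

end StripTiling

-- If `f 1 < f 0`, cell `0` is a square and the tail is tiled up-down. Otherwise `(f 0, f 2, …)` is
-- tiled up-down; a leading square there becomes a domino on cells `0, 1`, a leading domino a domino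
-- on cells `1, 2`.
theorem exists_isDownUp_comp_perm {α : Type*} [LinearOrder α] :
    ∀ {n : ℕ} (f : Fin n → α), Injective f → ∃ t : StripTiling n, IsDownUp (f ∘ t.perm)
  | 0, _, _ => ⟨.nil, isDownUp_of_le_one _ zero_le_one⟩
  | 1, _, _ => ⟨.square .nil, isDownUp_of_le_one _ le_rfl⟩
  | n + 2, f, hf => by
    rcases (hf.ne (show (1 : Fin (n + 2)) ≠ 0 from Fin.zero_lt_one.ne')).lt_or_gt with h10 | h01
    · obtain ⟨t, ht⟩ := exists_isDownUp_comp_perm (toDual ∘ Fin.tail f)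
        (toDual.injective.comp (hf.comp (Fin.succ_injective _)))
      refine ⟨.square t, ?_⟩
      rw [StripTiling.comp_perm_square, isDownUp_cons]
      exact ⟨(toDual_le_toDual.1 (t.le_comp_perm_zero (toDual ∘ Fin.tail f) ht)).trans_lt h10, ht⟩
    · obtain ⟨t, ht⟩ := exists_isDownUp_comp_perm (toDual ∘ Fin.cons (f 0) (Fin.tail (Fin.tail f)))
        (toDual.injective.comp (Fin.cons_injective_iff.2 ⟨fun ⟨_, hi⟩ => Fin.succ_ne_zero _ (hf hi),
          hf.comp ((Fin.succ_injective _).comp (Fin.succ_injective _))⟩))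
      cases t with
      | square t =>
        refine ⟨.domino t, ?_⟩
        rw [comp_assoc, StripTiling.comp_perm_square, Fin.cons_zero, Fin.tail_cons] at ht
        rw [StripTiling.comp_perm_domino, isDownUp_cons]
        exact ⟨h01, ht⟩
      | domino t =>
        refine ⟨.square (.domino t), ?_⟩
        rw [comp_assoc, StripTiling.comp_perm_domino, isDownUp_toDual_cons] at ht
        simp only [Fin.cons_zero, Fin.tail_cons, Fin.cons_one] at ht
        rw [StripTiling.comp_perm_square, isDownUp_cons, StripTiling.comp_perm_domino,
          isDownUp_toDual_cons]
        exact ⟨ht.1, ht.1.trans h01, ht.2.cons_of_le h01.le⟩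

theorem euler_fibonacci_factorial_general (n : ℕ) :
    n.factorial ≤ alternatingCount n * Nat.fib (n + 1) := by
  let Φ : {σ : Equiv.Perm (Fin n) // IsDownUp σ} × StripTiling n → Equiv.Perm (Fin n) :=
    fun x => x.2.perm.symm.trans x.1
  have hΦ : Surjective Φ := fun σ => by
    obtain ⟨t, ht⟩ := exists_isDownUp_comp_perm σ σ.injective
    exact ⟨(⟨t.perm.trans σ, ht⟩, t), by simp [Φ, ← Equiv.trans_assoc]⟩
  have := Nat.card_le_card_of_surjective Φ hΦ
  rwa [Nat.card_perm, Nat.card_fin, Nat.card_prod, StripTiling.card] at this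

/-- `E_n ⋅ F_n ≥ n!`, where `E_n` is the number of alternating permutations in `S_n`
and `F_n` is the Fibonacci number with the convention `F_1 = 1`, `F_2 = 2`
(i.e. `F_n = Nat.fib (n+1)`). -/
theorem euler_fibonacci_factorial (n : ℕ) (hn : 1 ≤ n) :
    n.factorial ≤ alternatingCount n * Nat.fib (n + 1) :=
  euler_fibonacci_factorial_general n
end

section
/- For any partition τ, the product of the hook lengths of τ is at most the product over all cells (i,j) of τ of (i+j-1): ∏_{(i,j)∈τ} h(i,j) ≤ ∏_{(i,j)∈τ} (i+j-1). -/
/-!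
Induct on the number of rows. Deleting the last row, say row `n` of length `t`, lowers by one
exactly the hooks of the `n × t` rectangle above it and leaves every other hook unchanged; on the
left it removes the hooks `t, t - 1, …, 1`, on the right the factors `n + 1, …, n + t`. It
therefore suffices that `t! ∏ (h + 1) ≤ (n + 1)⋯(n + t) ∏ h` over the rectangle, `h` being the
hooks of the smaller diagram. As `h(i, j) ≥ (n - i) + (t - 1 - j)` and `(x + 1) / x` decreases
in `x`, row `i` of the rectangle contributes a ratio at most `(n - i + t) / (n - i)` by
telescoping, and the product of these over all rows is `(n + t)! / (n! t!)`.
-/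

open Finset Nat

namespace Nat

theorem mul_prod_succ_le_add_mul_prod {t : ℕ} (a : ℕ) (f : ℕ → ℕ)
    (hf : ∀ j < t, a + (t - 1 - j) ≤ f j) :
    a * ∏ j ∈ range t, (f j + 1) ≤ (a + t) * ∏ j ∈ range t, f j := by
  induction t generalizing a with
  | zero => simp
  | succ t ih =>
    have hlast : a * (f t + 1) ≤ (a + 1) * f t := by nlinarith [hf t (by omega)]
    have hinit := ih (a + 1) fun j hj => by have := hf j (by omega); omega
    rw [prod_range_succ, prod_range_succ]
    refine Nat.le_of_mul_le_mul_left ?_ (Nat.succ_pos a)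
    calc (a + 1) * (a * ((∏ j ∈ range t, (f j + 1)) * (f t + 1)))
        = a * (f t + 1) * ((a + 1) * ∏ j ∈ range t, (f j + 1)) := by ring
      _ ≤ (a + 1) * f t * ((a + 1 + t) * ∏ j ∈ range t, f j) := Nat.mul_le_mul hlast hinit
      _ = (a + 1) * ((a + (t + 1)) * ((∏ j ∈ range t, f j) * f t)) := by ring

theorem factorial_mul_prod_succ_le_ascFactorial_mul_prod (r t : ℕ) (H : ℕ × ℕ → ℕ)
    (hH : ∀ i < r, ∀ j < t, (r - i) + (t - 1 - j) ≤ H (i, j)) :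
    t ! * ∏ c ∈ range r ×ˢ range t, (H c + 1) ≤
      (r + 1).ascFactorial t * ∏ c ∈ range r ×ˢ range t, H c := by
  have hrows : ∏ i ∈ range r, ((r - i) * ∏ j ∈ range t, (H (i, j) + 1)) ≤
      ∏ i ∈ range r, ((r - i + t) * ∏ j ∈ range t, H (i, j)) :=
    prod_le_prod' fun i hi => mul_prod_succ_le_add_mul_prod _ _ (hH i (mem_range.mp hi))
  have hdesc : ∏ i ∈ range r, (r - i + t) = (t + 1).ascFactorial r := by
    rw [← add_descFactorial_eq_ascFactorial, descFactorial_eq_prod_range]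
    exact prod_congr rfl fun i hi => by have := mem_range.mp hi; omega
  rw [prod_mul_distrib, prod_mul_distrib, ← descFactorial_eq_prod_range, descFactorial_self,
    hdesc] at hrows
  refine Nat.le_of_mul_le_mul_left ?_ (factorial_pos r)
  rw [prod_product, prod_product]
  calc r ! * (t ! * ∏ i ∈ range r, ∏ j ∈ range t, (H (i, j) + 1))
      = t ! * (r ! * ∏ i ∈ range r, ∏ j ∈ range t, (H (i, j) + 1)) := by ring
    _ ≤ t ! * ((t + 1).ascFactorial r * ∏ i ∈ range r, ∏ j ∈ range t, H (i, j)) :=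
        Nat.mul_le_mul_left _ hrows
    _ = r ! * ((r + 1).ascFactorial t * ∏ i ∈ range r, ∏ j ∈ range t, H (i, j)) := by
        rw [← mul_assoc, ← mul_assoc, factorial_mul_ascFactorial, factorial_mul_ascFactorial,
          add_comm]

end Nat

namespace YoungDiagram

def hookLength (μ : YoungDiagram) (c : ℕ × ℕ) : ℕ :=
  μ.rowLen c.1 + μ.colLen c.2 - c.1 - c.2 - 1

def takeRows (μ : YoungDiagram) (n : ℕ) : YoungDiagram where
  cells := μ.cells.filter (·.1 < n)
  isLowerSet _ _ hle h := by
    simp only [coe_filter, mem_cells, Set.mem_ofPred_eq] at h ⊢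
    exact ⟨μ.isLowerSet hle h.1, lt_of_le_of_lt hle.1 h.2⟩

variable {μ : YoungDiagram} {n : ℕ}

theorem mem_takeRows {c : ℕ × ℕ} : c ∈ μ.takeRows n ↔ c ∈ μ ∧ c.1 < n :=
  mem_filter

theorem rowLen_takeRows {i : ℕ} (hi : i < n) : (μ.takeRows n).rowLen i = μ.rowLen i :=
  eq_of_forall_lt_iff fun j => by
    rw [← mem_iff_lt_rowLen, ← mem_iff_lt_rowLen, mem_takeRows]
    exact and_iff_left hi

theorem colLen_takeRows (j : ℕ) : (μ.takeRows n).colLen j = min (μ.colLen j) n :=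
  eq_of_forall_lt_iff fun i => by
    rw [← mem_iff_lt_colLen, mem_takeRows, mem_iff_lt_colLen, lt_min_iff]

theorem lt_colLen_zero_of_mem {c : ℕ × ℕ} (hc : c ∈ μ) : c.1 < μ.colLen 0 :=
  (mem_iff_lt_colLen.mp hc).trans_le (μ.colLen_anti 0 c.2 c.2.zero_le)

theorem cells_eq_empty_of_colLen_zero (h : μ.colLen 0 = 0) : μ.cells = ∅ :=
  eq_empty_of_forall_notMem fun c hc => by
    have := lt_colLen_zero_of_mem ((mem_cells c).mp hc); omega

theorem filter_cells_takeRows_eq_range_product :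
    (μ.takeRows n).cells.filter (·.2 < μ.rowLen n) = range n ×ˢ range (μ.rowLen n) := by
  ext ⟨i, j⟩
  simp only [mem_filter, mem_cells, mem_takeRows, mem_product, mem_range]
  constructor
  · rintro ⟨⟨-, hi⟩, hj⟩
    exact ⟨hi, hj⟩
  · rintro ⟨hi, hj⟩
    exact ⟨⟨mem_iff_lt_rowLen.mpr (hj.trans_le (μ.rowLen_anti i n hi.le)), hi⟩, hj⟩

theorem colLen_eq_of_lt_rowLen_last (hμ : μ.colLen 0 = n + 1) {j : ℕ} (hj : j < μ.rowLen n) :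
    μ.colLen j = n + 1 :=
  le_antisymm (hμ ▸ μ.colLen_anti 0 j j.zero_le)
    (mem_iff_lt_colLen.mp (mem_iff_lt_rowLen.mpr hj))

theorem prod_cells_eq_prod_takeRows_mul (hμ : μ.colLen 0 = n + 1) (g : ℕ × ℕ → ℕ) :
    ∏ c ∈ μ.cells, g c =
      (∏ c ∈ (μ.takeRows n).cells, g c) * ∏ j ∈ range (μ.rowLen n), g (n, j) := by
  have hlast : μ.cells.filter (¬ ·.1 < n) = {n} ×ˢ range (μ.rowLen n) := by
    rw [← row_eq_prod, row]
    refine filter_congr fun c hc => ?_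
    have := lt_colLen_zero_of_mem ((mem_cells c).mp hc)
    omega
  rw [← prod_filter_mul_prod_filter_not μ.cells (·.1 < n), hlast, prod_product, prod_singleton]
  rfl

theorem prod_hookLength_last_row (hμ : μ.colLen 0 = n + 1) :
    ∏ j ∈ range (μ.rowLen n), μ.hookLength (n, j) = (μ.rowLen n)! := by
  rw [← descFactorial_self, descFactorial_eq_prod_range]
  refine prod_congr rfl fun j hj => ?_
  have := colLen_eq_of_lt_rowLen_last hμ (mem_range.mp hj)
  simp only [hookLength]
  omega

theorem hookLength_eq_hookLength_takeRows_add (hμ : μ.colLen 0 = n + 1) {c : ℕ × ℕ}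
    (hc : c ∈ μ.takeRows n) :
    μ.hookLength c = (μ.takeRows n).hookLength c + if c.2 < μ.rowLen n then 1 else 0 := by
  obtain ⟨hcμ, hcn⟩ := mem_takeRows.mp hc
  have harm := mem_iff_lt_rowLen.mp hcμ
  have hleg := mem_iff_lt_colLen.mp hcμ
  have hcol := colLen_takeRows (μ := μ) (n := n) c.2
  have hrow := rowLen_takeRows (μ := μ) hcn
  simp only [hookLength]
  split_ifs with hct
  · have := colLen_eq_of_lt_rowLen_last hμ hct
    omega
  · have : μ.colLen c.2 ≤ n := by
      by_contra hlong
      exact hct (mem_iff_lt_rowLen.mp (mem_iff_lt_colLen.mpr (by omega)))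
    omega

theorem le_hookLength_takeRows (hμ : μ.colLen 0 = n + 1) {i j : ℕ} (hi : i < n)
    (hj : j < μ.rowLen n) :
    (n - i) + (μ.rowLen n - 1 - j) ≤ (μ.takeRows n).hookLength (i, j) := by
  have hcol := colLen_takeRows (μ := μ) (n := n) j
  have := colLen_eq_of_lt_rowLen_last hμ hj
  have := rowLen_takeRows (μ := μ) hi
  have := μ.rowLen_anti i n hi.le
  simp only [hookLength]
  omega

theorem factorial_mul_prod_hookLength_le (hμ : μ.colLen 0 = n + 1) :
    (μ.rowLen n)! * ∏ c ∈ (μ.takeRows n).cells, μ.hookLength c ≤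
      (n + 1).ascFactorial (μ.rowLen n) *
        ∏ c ∈ (μ.takeRows n).cells, (μ.takeRows n).hookLength c := by
  set ν := μ.takeRows n
  set t := μ.rowLen n
  have hshort : ∏ c ∈ ν.cells with c.2 < t, μ.hookLength c =
      ∏ c ∈ range n ×ˢ range t, (ν.hookLength c + 1) := by
    rw [← filter_cells_takeRows_eq_range_product]
    refine prod_congr rfl fun c hc => ?_
    rw [mem_filter, mem_cells] at hc
    rw [hookLength_eq_hookLength_takeRows_add hμ hc.1, if_pos hc.2]
  have hlong : ∏ c ∈ ν.cells with ¬ c.2 < t, μ.hookLength c =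
      ∏ c ∈ ν.cells with ¬ c.2 < t, ν.hookLength c := by
    refine prod_congr rfl fun c hc => ?_
    rw [mem_filter, mem_cells] at hc
    rw [hookLength_eq_hookLength_takeRows_add hμ hc.1, if_neg hc.2, add_zero]
  have hrect := factorial_mul_prod_succ_le_ascFactorial_mul_prod n t ν.hookLength
    fun i hi j hj => le_hookLength_takeRows hμ hi hj
  rw [← prod_filter_mul_prod_filter_not ν.cells (·.2 < t), hshort, hlong, ← mul_assoc,
    ← prod_filter_mul_prod_filter_not ν.cells (·.2 < t), filter_cells_takeRows_eq_range_product,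
    ← mul_assoc]
  exact Nat.mul_le_mul_right _ hrect

theorem prod_hookLength_le_of_colLen_zero_eq (n : ℕ) (μ : YoungDiagram) (hμ : μ.colLen 0 = n) :
    ∏ c ∈ μ.cells, μ.hookLength c ≤ ∏ c ∈ μ.cells, (c.1 + c.2 + 1) := by
  induction n generalizing μ with
  | zero => simp [cells_eq_empty_of_colLen_zero hμ]
  | succ n ih =>
    have hν : (μ.takeRows n).colLen 0 = n := by rw [colLen_takeRows]; omega
    rw [prod_cells_eq_prod_takeRows_mul hμ, prod_cells_eq_prod_takeRows_mul hμ,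
      prod_hookLength_last_row hμ, mul_comm]
    calc (μ.rowLen n)! * ∏ c ∈ (μ.takeRows n).cells, μ.hookLength c
        ≤ (n + 1).ascFactorial (μ.rowLen n) *
            ∏ c ∈ (μ.takeRows n).cells, (μ.takeRows n).hookLength c :=
          factorial_mul_prod_hookLength_le hμ
      _ ≤ (n + 1).ascFactorial (μ.rowLen n) * ∏ c ∈ (μ.takeRows n).cells, (c.1 + c.2 + 1) :=
          Nat.mul_le_mul_left _ (ih _ hν)
      _ = (∏ c ∈ (μ.takeRows n).cells, (c.1 + c.2 + 1)) *
            ∏ j ∈ range (μ.rowLen n), (n + j + 1) := by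
          rw [ascFactorial_eq_prod_range, mul_comm]
          congr 1
          exact prod_congr rfl fun j _ => by ring

end YoungDiagram

/-- Cells are 0-indexed, so the factor `i + j - 1` of the paper is `c.1 + c.2 + 1` here. -/
theorem hook_inequality (τ : YoungDiagram) :
    ∏ c ∈ τ.cells, (τ.rowLen c.1 + τ.colLen c.2 - c.1 - c.2 - 1) ≤
      ∏ c ∈ τ.cells, (c.1 + c.2 + 1) :=
  τ.prod_hookLength_le_of_colLen_zero_eq _ rfl
end
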